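/- arXiv:math/0306270 — 5 statements merged into one kernel-verified Lean document; each statement's English description precedes it below -/
import Mathlib

section
/- In the setting below, for each 0 ≤ j ≤ g the subgroup of M_ℚ generated by Γ_j equals M_j. -/
open Finset

noncomputable def dotR {d : ℕ} (a u : Fin d → ℝ) : ℝ := ∑ i, a i * u i

def icastR {d : ℕ} (x : Fin d → ℤ) : Fin d → ℝ := fun i => (x i : ℝ)
def qcastR {d : ℕ} (x : Fin d → ℚ) : Fin d → ℝ := fun i => (x i : ℝ)

/-- The convex cone generated by a set: all finite nonnegative linear combinations. -/
def nonnegSpan {d : ℕ} (s : Set (Fin d → ℝ)) : Set (Fin d → ℝ) :=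
  {x | ∃ (n : ℕ) (c : Fin n → ℝ) (v : Fin n → (Fin d → ℝ)),
    (∀ i, 0 ≤ c i) ∧ (∀ i, v i ∈ s) ∧ x = ∑ i, c i • v i}

/-- A rational polyhedral cone: generated by finitely many lattice vectors. -/
def IsRatPolyCone {d : ℕ} (ρ : Set (Fin d → ℝ)) : Prop :=
  ∃ s : Finset (Fin d → ℤ), ρ = nonnegSpan (icastR '' (s : Set (Fin d → ℤ)))

/-- The dual cone w.r.t. the standard pairing on `ℝ^d`. -/
def dualSet {d : ℕ} (ρ : Set (Fin d → ℝ)) : Set (Fin d → ℝ) :=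
  {u | ∀ a ∈ ρ, 0 ≤ dotR a u}

/-- The partial order `u ≤_ρ u'` iff `u' − u ∈ ρ^∨`. -/
def leRho {d : ℕ} (ρ : Set (Fin d → ℝ)) (u u' : Fin d → ℚ) : Prop :=
  qcastR (u' - u) ∈ dualSet ρ

def ltRho {d : ℕ} (ρ : Set (Fin d → ℝ)) (u u' : Fin d → ℚ) : Prop :=
  leRho ρ u u' ∧ u ≠ u'

/-- The lattice `ℤ^d` inside `ℚ^d`. -/
def intCastHomQ (d : ℕ) : (Fin d → ℤ) →+ (Fin d → ℚ) where
  toFun x := fun i => (x i : ℚ)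
  map_zero' := by funext i; simp
  map_add' x y := by funext i; simp

def zLatQ (d : ℕ) : AddSubgroup (Fin d → ℚ) := (intCastHomQ d).range

open Finset in
/-- The semigroup `Γ_j = (ρ^∨ ∩ M) + ℕγ₁ + ⋯ + ℕγ_j` (as a subset of `ℚ^d`). -/
def GammaSet {d : ℕ} (ρ : Set (Fin d → ℝ)) (γ : ℕ → Fin d → ℚ) (j : ℕ) :
    Set (Fin d → ℚ) :=
  {u | ∃ (α : Fin d → ℤ) (l : ℕ → ℕ), icastR α ∈ dualSet ρ ∧
    u = intCastHomQ d α + ∑ i ∈ Icc 1 j, (l i : ℚ) • γ i}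

/-!
Because `ρ^∨` is a full-dimensional convex cone, it contains balls of every radius, hence a
lattice point `m` together with all the `m + eᵢ`; so `ρ^∨ ∩ M` already generates `M = M₀`.
Passing from `Γ_j` to `Γ_{j+1}` adjoins `γ_{j+1}`, while passing from `M_j` to `M_{j+1}` adjoins
`λ_{j+1}`, and `γ_{j+1} - λ_{j+1}` is `0` for `j = 0` and `n_j γ_j - λ_j ∈ M_j` otherwise, so the
equality propagates by induction on `j`.
-/

section DualCone

variable {d : ℕ} {ρ : Set (Fin d → ℝ)}

@[simp]
lemma icastR_zero : icastR (0 : Fin d → ℤ) = 0 :=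
  funext fun _ => Int.cast_zero

lemma dotR_eq_dotProduct (a u : Fin d → ℝ) : dotR a u = a ⬝ᵥ u := rfl

lemma zero_mem_dualSet : (0 : Fin d → ℝ) ∈ dualSet ρ := fun a _ => by
  simp [dotR_eq_dotProduct]

lemma smul_mem_dualSet {c : ℝ} (hc : 0 ≤ c) {u : Fin d → ℝ} (hu : u ∈ dualSet ρ) :
    c • u ∈ dualSet ρ := fun a ha => by
  rw [dotR_eq_dotProduct, dotProduct_smul, smul_eq_mul]
  exact mul_nonneg hc (hu a ha)

lemma convex_dualSet : Convex ℝ (dualSet ρ) := by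
  intro u hu v hv s t hs ht _ a ha
  rw [dotR_eq_dotProduct, dotProduct_add]
  exact add_nonneg (smul_mem_dualSet hs hu a ha) (smul_mem_dualSet ht hv a ha)

lemma interior_dualSet_nonempty (hddim : Submodule.span ℝ (dualSet ρ) = ⊤) :
    (interior (dualSet ρ)).Nonempty := by
  rw [convex_dualSet.interior_nonempty_iff_affineSpan_eq_top, ← AffineSubspace.coe_eq_univ_iff,
    ← Set.insert_eq_of_mem (zero_mem_dualSet (ρ := ρ)), affineSpan_insert_zero, hddim,
    Submodule.top_coe]

end DualCone

lemma exists_ball_subset_of_smul_mem {E : Type*} [NormedAddCommGroup E] [NormedSpace ℝ E]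
    {s : Set E} (hs : ∀ c : ℝ, 0 < c → ∀ u ∈ s, c • u ∈ s) (hint : (interior s).Nonempty)
    (R : ℝ) : ∃ y, Metric.ball y R ⊆ s := by
  obtain ⟨x, hx⟩ := hint
  obtain ⟨ε, hε, hball⟩ := Metric.mem_nhds_iff.mp (mem_interior_iff_mem_nhds.mp hx)
  set c : ℝ := |R| / ε + 1
  have hc : 0 < c := by positivity
  refine ⟨c • x, fun z hz => ?_⟩
  have hR : R ≤ ‖c‖ * ε := by
    rw [Real.norm_of_nonneg hc.le, add_mul, div_mul_cancel₀ _ hε.ne']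
    linarith [le_abs_self R]
  have hz' := Metric.ball_subset_ball hR hz
  rw [← smul_ball hc.ne'] at hz'
  obtain ⟨w, hw, rfl⟩ := hz'
  exact hs c hc w (hball hw)

lemma exists_int_translates_mem_ball {d : ℕ} (y : Fin d → ℝ) :
    ∃ m : Fin d → ℤ, icastR m ∈ Metric.ball y 2 ∧
      ∀ i, icastR (m + Pi.single i 1) ∈ Metric.ball y 2 := by
  refine ⟨fun j => ⌊y j⌋, ?_, fun i => ?_⟩ <;>
  · rw [Metric.mem_ball, dist_pi_lt_iff two_pos]
    intro j
    have h₁ := Int.floor_le (y j)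
    have h₂ := Int.lt_floor_add_one (y j)
    rw [Real.dist_eq, abs_lt]
    simp only [icastR, Pi.add_apply, Int.cast_add, Pi.single_apply]
    (try split_ifs) <;> push_cast <;> constructor <;> linarith

lemma exists_int_translates_mem_dualSet {d : ℕ} {ρ : Set (Fin d → ℝ)}
    (hddim : Submodule.span ℝ (dualSet ρ) = ⊤) :
    ∃ m : Fin d → ℤ, icastR m ∈ dualSet ρ ∧ ∀ i, icastR (m + Pi.single i 1) ∈ dualSet ρ := by
  obtain ⟨y, hy⟩ := exists_ball_subset_of_smul_mem (fun c hc u hu => smul_mem_dualSet hc.le hu)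
    (interior_dualSet_nonempty hddim) 2
  obtain ⟨m, hm, hmi⟩ := exists_int_translates_mem_ball y
  exact ⟨m, hy hm, fun i => hy (hmi i)⟩

lemma AddSubgroup.closure_eq_top_of_translates_mem {M ι : Type*} [AddCommGroup M] {v : ι → M}
    (hv : AddSubgroup.closure (Set.range v) = ⊤) {S : Set M} {m : M} (hm : m ∈ S)
    (hmv : ∀ i, m + v i ∈ S) : AddSubgroup.closure S = ⊤ := by
  rw [eq_top_iff, ← hv, AddSubgroup.closure_le]
  rintro _ ⟨i, rfl⟩
  rw [← add_sub_cancel_left m (v i)]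
  exact sub_mem (AddSubgroup.subset_closure (hmv i)) (AddSubgroup.subset_closure hm)

lemma AddSubgroup.closure_range_single_one (ι : Type*) [Finite ι] [DecidableEq ι] :
    AddSubgroup.closure (Set.range fun i : ι => Pi.single i (1 : ℤ)) = ⊤ := by
  have h := (Pi.basisFun ℤ ι).span_eq
  rw [show ⇑(Pi.basisFun ℤ ι) = fun i => Pi.single i 1 from funext (Pi.basisFun_apply ℤ ι)] at h
  rw [← Submodule.span_int_eq_addSubgroupClosure, h]
  rfl

section Gamma

variable {d : ℕ} {ρ : Set (Fin d → ℝ)} {γ : ℕ → Fin d → ℚ}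

lemma GammaSet_zero :
    GammaSet ρ γ 0 = intCastHomQ d '' {α | icastR α ∈ dualSet ρ} := by
  ext u
  simp [GammaSet, eq_comm]

lemma closure_GammaSet_zero (hddim : Submodule.span ℝ (dualSet ρ) = ⊤) :
    AddSubgroup.closure (GammaSet ρ γ 0) = zLatQ d := by
  obtain ⟨m, hm, hmi⟩ := exists_int_translates_mem_dualSet hddim
  rw [GammaSet_zero, ← AddMonoidHom.map_closure,
    AddSubgroup.closure_eq_top_of_translates_mem (AddSubgroup.closure_range_single_one _)
      (S := {α | icastR α ∈ dualSet ρ}) hm hmi,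
    ← AddMonoidHom.range_eq_map, zLatQ]

lemma GammaSet_subset_succ (j : ℕ) : GammaSet ρ γ j ⊆ GammaSet ρ γ (j + 1) := by
  rintro _ ⟨α, l, hα, rfl⟩
  refine ⟨α, Function.update l (j + 1) 0, hα, ?_⟩
  rw [Finset.sum_Icc_succ_top (by omega), Function.update_self, Nat.cast_zero, zero_smul,
    add_zero]
  refine congrArg _ (Finset.sum_congr rfl fun i hi => ?_)
  rw [Function.update_of_ne (by grind)]

lemma gamma_mem_GammaSet {j : ℕ} (hj : 1 ≤ j) : γ j ∈ GammaSet ρ γ j := by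
  refine ⟨0, Pi.single j 1, icastR_zero ▸ zero_mem_dualSet, ?_⟩
  rw [Finset.sum_eq_single_of_mem j (Finset.mem_Icc.mpr ⟨hj, le_rfl⟩)
    fun i _ hij => by simp [hij]]
  simp

lemma closure_GammaSet_succ (j : ℕ) :
    AddSubgroup.closure (GammaSet ρ γ (j + 1)) =
      AddSubgroup.closure (GammaSet ρ γ j) ⊔ AddSubgroup.closure {γ (j + 1)} := by
  refine le_antisymm ?_ (sup_le (AddSubgroup.closure_mono (GammaSet_subset_succ j)) ?_)
  · rw [AddSubgroup.closure_le]
    rintro _ ⟨α, l, hα, rfl⟩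
    rw [Finset.sum_Icc_succ_top (by omega), ← add_assoc, Nat.cast_smul_eq_nsmul]
    exact add_mem (AddSubgroup.mem_sup_left (AddSubgroup.subset_closure ⟨α, l, hα, rfl⟩))
      (AddSubgroup.mem_sup_right (nsmul_mem (AddSubgroup.mem_closure_singleton_self _) _))
  · rw [AddSubgroup.closure_le, Set.singleton_subset_iff]
    exact AddSubgroup.subset_closure (gamma_mem_GammaSet (by omega))

end Gamma

lemma AddSubgroup.sup_closure_singleton_le_of_sub_mem {G : Type*} [AddCommGroup G]
    (K : AddSubgroup G) {x y : G} (h : x - y ∈ K) :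
    K ⊔ AddSubgroup.closure {x} ≤ K ⊔ AddSubgroup.closure {y} := by
  refine sup_le le_sup_left ?_
  rw [AddSubgroup.closure_le, Set.singleton_subset_iff, ← sub_add_cancel x y]
  exact add_mem (AddSubgroup.mem_sup_left h)
    (AddSubgroup.mem_sup_right (AddSubgroup.mem_closure_singleton_self y))

lemma AddSubgroup.sup_closure_singleton_eq_of_sub_mem {G : Type*} [AddCommGroup G]
    (K : AddSubgroup G) {x y : G} (h : x - y ∈ K) :
    K ⊔ AddSubgroup.closure {x} = K ⊔ AddSubgroup.closure {y} :=
  le_antisymm (K.sup_closure_singleton_le_of_sub_mem h)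
    (K.sup_closure_singleton_le_of_sub_mem (by simpa using K.neg_mem h))

theorem stmt_6_general
    (d g : ℕ)
    (ρ : Set (Fin d → ℝ))
    (hddim : Submodule.span ℝ (dualSet ρ) = ⊤)
    (lam : ℕ → Fin d → ℚ)
    (Ms : ℕ → AddSubgroup (Fin d → ℚ))
    (hM0 : Ms 0 = zLatQ d)
    (hMs : ∀ j, 1 ≤ j → j ≤ g → Ms j = Ms (j - 1) ⊔ AddSubgroup.closure {lam j})
    (nj : ℕ → ℕ)
    (γ : ℕ → Fin d → ℚ)
    (hγ1 : γ 1 = lam 1)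
    (hγrec : ∀ j, 1 ≤ j → j < g → γ (j + 1) = (nj j : ℚ) • γ j + lam (j + 1) - lam j)
    :
    ∀ j, j ≤ g → AddSubgroup.closure (GammaSet ρ γ j) = Ms j := by
  intro j hj
  induction j with
  | zero => rw [closure_GammaSet_zero hddim, hM0]
  | succ j ih =>
    rw [closure_GammaSet_succ, ih (by omega), hMs (j + 1) (by omega) hj, Nat.add_sub_cancel]
    apply AddSubgroup.sup_closure_singleton_eq_of_sub_mem
    rcases j with _ | k
    · simp [hγ1]
    · have hγk : γ (k + 1) ∈ Ms (k + 1) :=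
        ih (by omega) ▸ AddSubgroup.subset_closure (gamma_mem_GammaSet (by omega))
      have hlamk : lam (k + 1) ∈ Ms (k + 1) := by
        rw [hMs (k + 1) (by omega) (by omega)]
        exact AddSubgroup.mem_sup_right (AddSubgroup.mem_closure_singleton_self _)
      rw [hγrec (k + 1) (by omega) (by omega), Nat.cast_smul_eq_nsmul,
        show ∀ a b c : Fin d → ℚ, a + b - c - b = a - c from fun _ _ _ => by abel]
      exact sub_mem (nsmul_mem hγk _) hlamk

/-- The subgroup of `M_ℚ` generated by `Γ_j` equals `M_j`, for `0 ≤ j ≤ g`. -/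
theorem stmt_6
    (d g : ℕ) (hd : 1 ≤ d) (hg : 1 ≤ g)
    (ρ : Set (Fin d → ℝ))
    (hρ : IsRatPolyCone ρ)
    (hρsc : ∀ x ∈ ρ, -x ∈ ρ → x = 0)
    (hρdim : Submodule.span ℝ ρ = ⊤)
    (hdsc : ∀ u ∈ dualSet ρ, -u ∈ dualSet ρ → u = 0)
    (hddim : Submodule.span ℝ (dualSet ρ) = ⊤)
    (lam : ℕ → Fin d → ℚ)
    (hlam_mem : ∀ j, 1 ≤ j → j ≤ g → qcastR (lam j) ∈ dualSet ρ)
    (hlam_lt : ∀ j, 1 ≤ j → j < g → ltRho ρ (lam j) (lam (j + 1)))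
    (Ms : ℕ → AddSubgroup (Fin d → ℚ))
    (hM0 : Ms 0 = zLatQ d)
    (hMs : ∀ j, 1 ≤ j → j ≤ g → Ms j = Ms (j - 1) ⊔ AddSubgroup.closure {lam j})
    (hlam_not : ∀ j, 1 ≤ j → j ≤ g → lam j ∉ Ms (j - 1))
    (nj : ℕ → ℕ)
    (hnj : ∀ j, 1 ≤ j → j ≤ g → nj j = (Ms (j - 1)).relIndex (Ms j))
    (hnj2 : ∀ j, 1 ≤ j → j ≤ g → 2 ≤ nj j)
    (γ : ℕ → Fin d → ℚ)
    (hγ1 : γ 1 = lam 1)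
    (hγrec : ∀ j, 1 ≤ j → j < g → γ (j + 1) = (nj j : ℚ) • γ j + lam (j + 1) - lam j)
    :
    ∀ j, j ≤ g → AddSubgroup.closure (GammaSet ρ γ j) = Ms j :=
  stmt_6_general d g ρ hddim lam Ms hM0 hMs nj γ hγ1 hγrec
end

section
/- In the setting below: (i) γ_j >_ρ n_{j-1}γ_{j-1} for j = 2, …, g; (ii) for every j = 1, …, g and every u ∈ ρ^∨ ∩ M_j, one has u + n_jγ_j ∈ Γ_j. -/
/-!
Part (i) holds because `γ_j - n_{j-1} γ_{j-1} = λ_j - λ_{j-1}`. Part (ii) is proved by induction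
on `j`. Since `n_j λ_j ∈ M_{j-1}`, write `u = v + k λ_j` with `v ∈ M_{j-1}` and `0 ≤ k < n_j`; then
`u + n_j γ_j = w + k γ_j` with `w = u + (n_j - k) γ_j`. As `γ_j ≡ λ_j` modulo `M_{j-1}`, the vector
`w` lies in `M_{j-1}`, and `w - n_{j-1} γ_{j-1} = u + (n_j - k - 1) γ_j + (λ_j - λ_{j-1})` lies in
`ρ^∨ ∩ M_{j-1}`, so the induction hypothesis gives `w ∈ Γ_{j-1}` (for `j = 1`, simply
`w ∈ ρ^∨ ∩ M = Γ_0`).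
-/

open Finset

theorem AddSubgroup.exists_add_nsmul_of_mem_sup_closure {G : Type*} [AddCommGroup G]
    {H : AddSubgroup G} {x : G} {n : ℕ} (hn : 0 < n) (hnx : n • x ∈ H) {u : G}
    (hu : u ∈ H ⊔ AddSubgroup.closure {x}) : ∃ v ∈ H, ∃ k < n, u = v + k • x := by
  obtain ⟨h, hh, z, hz, rfl⟩ := AddSubgroup.mem_sup.1 hu
  obtain ⟨m, rfl⟩ := AddSubgroup.mem_closure_singleton.1 hz
  have hmod : 0 ≤ m % n := Int.emod_nonneg m (by omega)
  have hmod_lt : m % n < n := Int.emod_lt_of_pos m (by omega)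
  refine ⟨h + (m / n) • n • x, H.add_mem hh (H.zsmul_mem hnx _), (m % n).toNat, by omega, ?_⟩
  rw [add_assoc, ← natCast_zsmul x (m % n).toNat, Int.toNat_of_nonneg hmod, ← natCast_zsmul x n,
    ← mul_zsmul, ← add_zsmul, Int.ediv_mul_add_emod]

theorem add_nsmul_mem_of_mem_sup_closure {G : Type*} [AddCommGroup G] {D : AddSubmonoid G}
    {H : AddSubgroup G} {S S' : Set G} {x y δ : G} {n : ℕ} (hn : 0 < n) (hnx : n • x ∈ H)
    (hyx : y - x ∈ H) (hδH : δ ∈ H) (hδD : δ ∈ D) (hyδ : y - δ ∈ D)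
    (hS : ∀ w ∈ H, w ∈ D → w + δ ∈ S) (hS' : ∀ w ∈ S, ∀ k : ℕ, w + k • y ∈ S')
    {u : G} (hu : u ∈ H ⊔ AddSubgroup.closure {x}) (huD : u ∈ D) : u + n • y ∈ S' := by
  obtain ⟨v, hv, k, hk, rfl⟩ := AddSubgroup.exists_add_nsmul_of_mem_sup_closure hn hnx hu
  obtain ⟨m, rfl⟩ : ∃ m, n = k + m + 1 := ⟨n - k - 1, by omega⟩
  have hy : y ∈ D := by simpa using add_mem hyδ hδD
  have hwD : v + k • x + m • y + (y - δ) ∈ D := add_mem (add_mem huD (nsmul_mem hy m)) hyδ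
  -- `y ≡ x` and `n • x ≡ 0` modulo `H`
  have hwH : v + k • x + m • y + (y - δ) ∈ H := by
    have hw : v + k • x + m • y + (y - δ) = v + (k + m + 1) • x + (m + 1) • (y - x) - δ := by
      simp only [add_nsmul, one_nsmul, nsmul_sub]; abel
    rw [hw]
    exact sub_mem (add_mem (add_mem hv hnx) (nsmul_mem hyx _)) hδH
  convert hS' _ (hS _ hwH hwD) k using 1
  simp only [add_nsmul, one_nsmul]; abel

def dualSetRat {d : ℕ} (ρ : Set (Fin d → ℝ)) : AddSubmonoid (Fin d → ℚ) where
  carrier := {u | qcastR u ∈ dualSet ρ}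
  add_mem' {u v} hu hv a ha := by
    have h : dotR a (qcastR (u + v)) = dotR a (qcastR u) + dotR a (qcastR v) := by
      simp [dotR, qcastR, mul_add, sum_add_distrib]
    rw [h]
    exact add_nonneg (hu a ha) (hv a ha)
  zero_mem' a _ := by simp [dotR, qcastR]

theorem mem_dualSetRat {d : ℕ} {ρ : Set (Fin d → ℝ)} {u : Fin d → ℚ} :
    u ∈ dualSetRat ρ ↔ qcastR u ∈ dualSet ρ := Iff.rfl

theorem ltRho_of_sub_eq {d : ℕ} {ρ : Set (Fin d → ℝ)} {u u' v v' : Fin d → ℚ}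
    (h : u' - u = v' - v) (hv : ltRho ρ v v') : ltRho ρ u u' := by
  refine ⟨by rw [leRho, h]; exact hv.1, fun hu => hv.2 ?_⟩
  rw [hu, sub_self, eq_comm, sub_eq_zero] at h
  exact h.symm

section GammaSet

variable {d : ℕ} {ρ : Set (Fin d → ℝ)} {γ : ℕ → Fin d → ℚ}

theorem mem_gammaSet_zero {w : Fin d → ℚ} (hw : w ∈ zLatQ d) (hwD : w ∈ dualSetRat ρ) :
    w ∈ GammaSet ρ γ 0 := by
  obtain ⟨α, rfl⟩ := hw
  refine ⟨α, 0, ?_, by simp⟩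
  convert mem_dualSetRat.1 hwD using 1
  funext i
  simp [icastR, qcastR, intCastHomQ]

theorem add_nsmul_mem_gammaSet_succ {j : ℕ} {w : Fin d → ℚ} (hw : w ∈ GammaSet ρ γ j) (k : ℕ) :
    w + k • γ (j + 1) ∈ GammaSet ρ γ (j + 1) := by
  obtain ⟨α, l, hα, rfl⟩ := hw
  refine ⟨α, Function.update l (j + 1) k, hα, ?_⟩
  have hl : ∀ i ∈ Icc 1 j, ((Function.update l (j + 1) k i : ℕ) : ℚ) • γ i = (l i : ℚ) • γ i :=
    fun i hi => by rw [Function.update_of_ne (by simp at hi; omega)]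
  rw [sum_Icc_succ_top (by omega), sum_congr rfl hl, Function.update_self,
    Nat.cast_smul_eq_nsmul, add_assoc]

end GammaSet

section Sequence

variable {d g : ℕ} {ρ : Set (Fin d → ℝ)} {lam γ : ℕ → Fin d → ℚ}
  {Ms : ℕ → AddSubgroup (Fin d → ℚ)} {nj : ℕ → ℕ}

theorem lam_mem_Ms (hMs : ∀ t < g, Ms (t + 1) = Ms t ⊔ AddSubgroup.closure {lam (t + 1)}) :
    ∀ t < g, lam (t + 1) ∈ Ms (t + 1) := fun t ht => by
  rw [hMs t ht]
  exact AddSubgroup.mem_sup_right (AddSubgroup.subset_closure rfl)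

theorem gamma_mem_Ms (hMs : ∀ t < g, Ms (t + 1) = Ms t ⊔ AddSubgroup.closure {lam (t + 1)})
    (hγ1 : γ 1 = lam 1)
    (hγrec : ∀ j, 1 ≤ j → j < g → γ (j + 1) = (nj j : ℚ) • γ j + lam (j + 1) - lam j) :
    ∀ t < g, γ (t + 1) ∈ Ms (t + 1) := by
  have hlam := lam_mem_Ms hMs
  intro t ht
  induction t with
  | zero => rw [hγ1]; exact hlam 0 ht
  | succ t ih =>
    have hle : Ms (t + 1) ≤ Ms (t + 1 + 1) := by rw [hMs (t + 1) ht]; exact le_sup_left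
    rw [hγrec (t + 1) (by omega) ht, Nat.cast_smul_eq_nsmul]
    exact sub_mem (add_mem (nsmul_mem (hle (ih (by omega))) _) (hlam (t + 1) ht))
      (hle (hlam t (by omega)))

theorem gamma_mem_dualSetRat (hlam1 : lam 1 ∈ dualSetRat ρ)
    (hlam_le : ∀ j, 1 ≤ j → j < g → leRho ρ (lam j) (lam (j + 1))) (hγ1 : γ 1 = lam 1)
    (hγrec : ∀ j, 1 ≤ j → j < g → γ (j + 1) = (nj j : ℚ) • γ j + lam (j + 1) - lam j) :
    ∀ t < g, γ (t + 1) ∈ dualSetRat ρ := by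
  intro t ht
  induction t with
  | zero => rwa [hγ1]
  | succ t ih =>
    rw [hγrec (t + 1) (by omega) ht, Nat.cast_smul_eq_nsmul, add_sub_assoc]
    exact add_mem (nsmul_mem (ih (by omega)) _) (hlam_le (t + 1) (by omega) ht)

theorem add_nsmul_gamma_mem_gammaSet (hM0 : Ms 0 = zLatQ d)
    (hMs : ∀ t < g, Ms (t + 1) = Ms t ⊔ AddSubgroup.closure {lam (t + 1)})
    (hnlam : ∀ t < g, nj (t + 1) • lam (t + 1) ∈ Ms t) (hnj : ∀ t < g, 0 < nj (t + 1))
    (hlam1 : lam 1 ∈ dualSetRat ρ)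
    (hlam_le : ∀ j, 1 ≤ j → j < g → leRho ρ (lam j) (lam (j + 1))) (hγ1 : γ 1 = lam 1)
    (hγrec : ∀ j, 1 ≤ j → j < g → γ (j + 1) = (nj j : ℚ) • γ j + lam (j + 1) - lam j) :
    ∀ t < g, ∀ u ∈ Ms (t + 1), u ∈ dualSetRat ρ →
      u + nj (t + 1) • γ (t + 1) ∈ GammaSet ρ γ (t + 1) := by
  intro t ht u hu huD
  rw [hMs t ht] at hu
  induction t generalizing u with
  | zero =>
    refine add_nsmul_mem_of_mem_sup_closure (hnj 0 ht) (hnlam 0 ht) (by simp [hγ1])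
      (zero_mem _) (zero_mem _) (by simpa [hγ1] using hlam1) (fun w hw hwD => ?_)
      (fun w hw k => add_nsmul_mem_gammaSet_succ hw k) hu huD
    rw [add_zero]
    exact mem_gammaSet_zero (hM0 ▸ hw) hwD
  | succ t ih =>
    have hrec := hγrec (t + 1) (by omega) ht
    refine add_nsmul_mem_of_mem_sup_closure (hnj _ ht) (hnlam _ ht) ?_
      (nsmul_mem (gamma_mem_Ms hMs hγ1 hγrec t (by omega)) _)
      (nsmul_mem (gamma_mem_dualSetRat hlam1 hlam_le hγ1 hγrec t (by omega)) _) ?_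
      (fun w hw hwD => ih (by omega) w (by rwa [← hMs t (by omega)]) hwD)
      (fun w hw k => add_nsmul_mem_gammaSet_succ hw k) hu huD
    · rw [hrec, Nat.cast_smul_eq_nsmul, sub_right_comm, add_sub_cancel_right]
      exact sub_mem (nsmul_mem (gamma_mem_Ms hMs hγ1 hγrec t (by omega)) _)
        (lam_mem_Ms hMs t (by omega))
    · rw [hrec, Nat.cast_smul_eq_nsmul, add_sub_assoc, add_sub_cancel_left]
      exact hlam_le (t + 1) (by omega) ht

end Sequence

theorem stmt_8_general
    (d g : ℕ)
    (ρ : Set (Fin d → ℝ))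
    (lam : ℕ → Fin d → ℚ)
    (hlam_mem : ∀ j, 1 ≤ j → j ≤ g → qcastR (lam j) ∈ dualSet ρ)
    (hlam_lt : ∀ j, 1 ≤ j → j < g → ltRho ρ (lam j) (lam (j + 1)))
    (Ms : ℕ → AddSubgroup (Fin d → ℚ))
    (hM0 : Ms 0 = zLatQ d)
    (hMs : ∀ j, 1 ≤ j → j ≤ g → Ms j = Ms (j - 1) ⊔ AddSubgroup.closure {lam j})
    (nj : ℕ → ℕ)
    (hnj : ∀ j, 1 ≤ j → j ≤ g → nj j = (Ms (j - 1)).relIndex (Ms j))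
    (hnj2 : ∀ j, 1 ≤ j → j ≤ g → 2 ≤ nj j)
    (γ : ℕ → Fin d → ℚ)
    (hγ1 : γ 1 = lam 1)
    (hγrec : ∀ j, 1 ≤ j → j < g → γ (j + 1) = (nj j : ℚ) • γ j + lam (j + 1) - lam j)
    :
    (∀ j, 2 ≤ j → j ≤ g → ltRho ρ ((nj (j - 1) : ℚ) • γ (j - 1)) (γ j)) ∧
    (∀ j, 1 ≤ j → j ≤ g → ∀ u : Fin d → ℚ, u ∈ Ms j → qcastR u ∈ dualSet ρ →
      u + (nj j : ℚ) • γ j ∈ GammaSet ρ γ j) := by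
  have hMs' : ∀ t < g, Ms (t + 1) = Ms t ⊔ AddSubgroup.closure {lam (t + 1)} :=
    fun t ht => hMs (t + 1) (by omega) ht
  have hnlam : ∀ t < g, nj (t + 1) • lam (t + 1) ∈ Ms t := fun t ht => by
    rw [hnj (t + 1) (by omega) ht]
    exact AddSubgroup.nsmul_relIndex_mem _ (lam_mem_Ms hMs' t ht)
  refine ⟨fun j hj hjg => ?_, fun j hj hjg u hu huD => ?_⟩
  · obtain ⟨t, rfl⟩ : ∃ t, j = t + 1 := ⟨j - 1, by omega⟩
    refine ltRho_of_sub_eq ?_ (hlam_lt t (by omega) hjg)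
    rw [Nat.add_sub_cancel, hγrec t (by omega) hjg]
    abel
  · obtain ⟨t, rfl⟩ : ∃ t, j = t + 1 := ⟨j - 1, by omega⟩
    rw [Nat.cast_smul_eq_nsmul]
    exact add_nsmul_gamma_mem_gammaSet hM0 hMs' hnlam
      (fun t ht => by have := hnj2 (t + 1) (by omega) ht; omega) (hlam_mem 1 le_rfl (by omega))
      (fun j hj hjg => (hlam_lt j hj hjg).1) hγ1 hγrec t (by omega) u hu huD

/-- (i) `γ_j >_ρ n_{j-1}γ_{j-1}` for `2 ≤ j ≤ g`; (ii) for `1 ≤ j ≤ g` and `u ∈ ρ^∨ ∩ M_j`, one has `u + n_jγ_j ∈ Γ_j`. -/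
theorem stmt_8
    (d g : ℕ) (hd : 1 ≤ d) (hg : 1 ≤ g)
    (ρ : Set (Fin d → ℝ))
    (hρ : IsRatPolyCone ρ)
    (hρsc : ∀ x ∈ ρ, -x ∈ ρ → x = 0)
    (hρdim : Submodule.span ℝ ρ = ⊤)
    (hdsc : ∀ u ∈ dualSet ρ, -u ∈ dualSet ρ → u = 0)
    (hddim : Submodule.span ℝ (dualSet ρ) = ⊤)
    (lam : ℕ → Fin d → ℚ)
    (hlam_mem : ∀ j, 1 ≤ j → j ≤ g → qcastR (lam j) ∈ dualSet ρ)
    (hlam_lt : ∀ j, 1 ≤ j → j < g → ltRho ρ (lam j) (lam (j + 1)))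
    (Ms : ℕ → AddSubgroup (Fin d → ℚ))
    (hM0 : Ms 0 = zLatQ d)
    (hMs : ∀ j, 1 ≤ j → j ≤ g → Ms j = Ms (j - 1) ⊔ AddSubgroup.closure {lam j})
    (hlam_not : ∀ j, 1 ≤ j → j ≤ g → lam j ∉ Ms (j - 1))
    (nj : ℕ → ℕ)
    (hnj : ∀ j, 1 ≤ j → j ≤ g → nj j = (Ms (j - 1)).relIndex (Ms j))
    (hnj2 : ∀ j, 1 ≤ j → j ≤ g → 2 ≤ nj j)
    (γ : ℕ → Fin d → ℚ)
    (hγ1 : γ 1 = lam 1)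
    (hγrec : ∀ j, 1 ≤ j → j < g → γ (j + 1) = (nj j : ℚ) • γ j + lam (j + 1) - lam j)
    :
    (∀ j, 2 ≤ j → j ≤ g → ltRho ρ ((nj (j - 1) : ℚ) • γ (j - 1)) (γ j)) ∧
    (∀ j, 1 ≤ j → j ≤ g → ∀ u : Fin d → ℚ, u ∈ Ms j → qcastR u ∈ dualSet ρ →
      u + (nj j : ℚ) • γ j ∈ GammaSet ρ γ j) :=
  stmt_8_general d g ρ lam hlam_mem hlam_lt Ms hM0 hMs nj hnj hnj2 γ hγ1 hγrec
end

section
/- In the setting below, for each j = 1, …, g one has n_jγ_j ∈ Γ_{j-1}, and there is a unique expression n_jγ_j = α^{(j)} + l_1^{(j)}γ_1 + ⋯ + l_{j-1}^{(j)}γ_{j-1} with α^{(j)} ∈ M and 0 ≤ l_i^{(j)} ≤ n_i − 1 for all 1 ≤ i ≤ j−1; moreover α^{(j)} ∈ ρ^∨ ∩ M. -/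
open Finset

/-!
The recursion gives `γ_j ≡ λ_j` modulo `M_{j-1}`, so `M_j = M_{j-1} + ℤγ_j` and `n_j` is the order
of `γ_j` in `M_j / M_{j-1}`. Hence every element of `M_{j-1}`, in particular `n_jγ_j`, has a unique
mixed-radix expansion `α + ∑ l_iγ_i` along the chain `M_0 ⊆ ⋯ ⊆ M_{j-1}`, with `α ∈ M` and
`0 ≤ l_i < n_i`. Unwinding the recursion gives `γ_j = λ_j + ∑_{i<j} (n_i - 1)γ_i`, so that
`α = λ_j + (n_j - 1)γ_j + ∑_{i<j} (n_i - 1 - l_i)γ_i` is a combination with natural coefficients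
of `λ_j` and of `γ_1, …, γ_j`, all of which lie in `ρ^∨` because the `λ_i` do.
-/

namespace AddSubgroup

variable {G : Type*} [AddCommGroup G] (H : AddSubgroup G) (x : G)

theorem relIndex_sup_closure_singleton :
    H.relIndex (H ⊔ closure {x}) = addOrderOf (x : G ⧸ H) := by
  have hker : H.comap (zmultiplesHom G x) =
      ((QuotientAddGroup.mk' H).comp (zmultiplesHom G x)).ker := by
    ext k; simp [-QuotientAddGroup.mk_zsmul, QuotientAddGroup.eq_zero_iff]
  rw [relIndex_sup_left, ← zmultiples_eq_closure, ← range_zmultiplesHom, ← index_comap, hker,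
    index_ker, AddMonoidHom.range_comp, range_zmultiplesHom,
    AddMonoidHom.map_zmultiples, Nat.card_zmultiples]
  rfl

theorem zsmul_mem_iff_relIndex_dvd (k : ℤ) :
    k • x ∈ H ↔ (H.relIndex (H ⊔ closure {x}) : ℤ) ∣ k := by
  rw [relIndex_sup_closure_singleton, addOrderOf_dvd_iff_zsmul_eq_zero,
    ← QuotientAddGroup.mk_zsmul, QuotientAddGroup.eq_zero_iff]

theorem relIndex_sup_closure_nsmul_mem : H.relIndex (H ⊔ closure {x}) • x ∈ H := by
  simpa using (zsmul_mem_iff_relIndex_dvd H x _).2 dvd_rfl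

variable {H x} in
theorem sup_closure_singleton_eq_of_sub_mem_s9 {y : G} (h : y - x ∈ H) :
    H ⊔ closure {x} = H ⊔ closure {y} := by
  have key : ∀ a b : G, b - a ∈ H → H ⊔ closure {a} ≤ H ⊔ closure {b} := fun a b hab =>
    sup_le le_sup_left <| (closure_le _).2 <| Set.singleton_subset_iff.2 <| by
      rw [← sub_sub_cancel b a]
      exact sub_mem (mem_sup_right (mem_closure_singleton_self b)) (mem_sup_left hab)
  exact le_antisymm (key x y h) (key y x (by simpa using neg_mem h))

theorem exists_add_nsmul_of_mem_sup_closure_s9 (hn : H.relIndex (H ⊔ closure {x}) ≠ 0) {m : G}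
    (hm : m ∈ H ⊔ closure {x}) :
    ∃ h ∈ H, ∃ r < H.relIndex (H ⊔ closure {x}), m = h + r • x := by
  set n := H.relIndex (H ⊔ closure {x})
  obtain ⟨h, hh, _, hc, rfl⟩ := mem_sup.1 hm
  obtain ⟨z, rfl⟩ := mem_zmultiples_iff.1 (zmultiples_eq_closure x ▸ hc)
  have hr : ((z % n).toNat : ℤ) = z % n := Int.toNat_of_nonneg (Int.emod_nonneg z (by omega))
  refine ⟨h + (n * (z / n)) • x, add_mem hh ((zsmul_mem_iff_relIndex_dvd H x _).2 ⟨_, rfl⟩),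
    (z % n).toNat, by have := Int.emod_lt_of_pos z (by omega : (0 : ℤ) < n); omega, ?_⟩
  rw [← natCast_zsmul, hr, add_assoc, ← add_zsmul, Int.mul_ediv_add_emod]

variable {H x} in
theorem eq_of_add_nsmul_eq_add_nsmul {h h' : G} (hh : h ∈ H) (hh' : h' ∈ H) {r r' : ℕ}
    (hr : r < H.relIndex (H ⊔ closure {x})) (hr' : r' < H.relIndex (H ⊔ closure {x}))
    (heq : h + r • x = h' + r' • x) : h = h' ∧ r = r' := by
  have hdvd : (H.relIndex (H ⊔ closure {x}) : ℤ) ∣ (r - r' : ℤ) := by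
    refine (zsmul_mem_iff_relIndex_dvd H x _).1 ?_
    rw [show ((r : ℤ) - r') • x = h' - h by linear_combination (norm := module) heq]
    exact sub_mem hh' hh
  have hrr : r = r' := by
    have := Int.eq_zero_of_abs_lt_dvd hdvd (by rw [abs_lt]; omega)
    omega
  subst hrr
  exact ⟨add_right_cancel heq, rfl⟩

end AddSubgroup

section MixedRadix

open AddSubgroup

variable {G : Type*} [AddCommGroup G] {M : ℕ → AddSubgroup G} {γ : ℕ → G} {k : ℕ}

theorem add_sum_nsmul_mem (hM : ∀ i, 1 ≤ i → i ≤ k → M i = M (i - 1) ⊔ closure {γ i})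
    {α : G} (hα : α ∈ M 0) (l : ℕ → ℕ) : α + ∑ i ∈ Icc 1 k, l i • γ i ∈ M k := by
  induction k with
  | zero => simpa using hα
  | succ k ih =>
    have hMk : M (k + 1) = M k ⊔ closure {γ (k + 1)} := hM (k + 1) (by omega) le_rfl
    rw [sum_Icc_succ_top (by omega), ← add_assoc, hMk]
    exact add_mem (mem_sup_left (ih fun i h1 h2 => hM i h1 (by omega)))
      (mem_sup_right (nsmul_mem (mem_closure_singleton_self _) _))

theorem exists_eq_add_sum_nsmul (hM : ∀ i, 1 ≤ i → i ≤ k → M i = M (i - 1) ⊔ closure {γ i})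
    (hn : ∀ i, 1 ≤ i → i ≤ k → (M (i - 1)).relIndex (M i) ≠ 0) {m : G} (hm : m ∈ M k) :
    ∃ α ∈ M 0, ∃ l : ℕ → ℕ, (∀ i, 1 ≤ i → i ≤ k → l i < (M (i - 1)).relIndex (M i)) ∧
      m = α + ∑ i ∈ Icc 1 k, l i • γ i := by
  induction k generalizing m with
  | zero => exact ⟨m, hm, fun _ => 0, fun i h1 h2 => by omega, by simp⟩
  | succ k ih =>
    have hMk : M (k + 1) = M k ⊔ closure {γ (k + 1)} := hM (k + 1) (by omega) le_rfl
    have hnk : (M k).relIndex (M (k + 1)) ≠ 0 := hn (k + 1) (by omega) le_rfl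
    rw [hMk] at hm hnk
    obtain ⟨h, hh, r, hr, rfl⟩ := exists_add_nsmul_of_mem_sup_closure_s9 _ _ hnk hm
    obtain ⟨α, hα, l, hl, rfl⟩ :=
      ih (fun i h1 h2 => hM i h1 (by omega)) (fun i h1 h2 => hn i h1 (by omega)) hh
    refine ⟨α, hα, Function.update l (k + 1) r, fun i h1 h2 => ?_, ?_⟩
    · rcases (show i ≤ k ∨ i = k + 1 by omega) with hik | rfl
      · rw [Function.update_of_ne (by omega)]
        exact hl i h1 hik
      · rw [Function.update_self, hMk]
        exact hr
    · have hsum : ∑ i ∈ Icc 1 k, Function.update l (k + 1) r i • γ i = ∑ i ∈ Icc 1 k, l i • γ i :=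
        sum_congr rfl fun i hi => by rw [Function.update_of_ne (by simp at hi; omega)]
      rw [sum_Icc_succ_top (by omega), hsum, Function.update_self, add_assoc]

theorem eq_of_add_sum_nsmul_eq (hM : ∀ i, 1 ≤ i → i ≤ k → M i = M (i - 1) ⊔ closure {γ i})
    {α α' : G} (hα : α ∈ M 0) (hα' : α' ∈ M 0) {l l' : ℕ → ℕ}
    (hl : ∀ i, 1 ≤ i → i ≤ k → l i < (M (i - 1)).relIndex (M i))
    (hl' : ∀ i, 1 ≤ i → i ≤ k → l' i < (M (i - 1)).relIndex (M i))
    (heq : α + ∑ i ∈ Icc 1 k, l i • γ i = α' + ∑ i ∈ Icc 1 k, l' i • γ i) :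
    α = α' ∧ ∀ i, 1 ≤ i → i ≤ k → l i = l' i := by
  induction k with
  | zero => exact ⟨by simpa using heq, by omega⟩
  | succ k ih =>
    have hMk : M (k + 1) = M k ⊔ closure {γ (k + 1)} := hM (k + 1) (by omega) le_rfl
    have hM' : ∀ i, 1 ≤ i → i ≤ k → M i = M (i - 1) ⊔ closure {γ i} :=
      fun i h1 h2 => hM i h1 (by omega)
    have hlk : l (k + 1) < (M k).relIndex (M (k + 1)) := hl (k + 1) (by omega) le_rfl
    have hlk' : l' (k + 1) < (M k).relIndex (M (k + 1)) := hl' (k + 1) (by omega) le_rfl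
    rw [hMk] at hlk hlk'
    simp only [sum_Icc_succ_top (show 1 ≤ k + 1 by omega), ← add_assoc] at heq
    obtain ⟨hrest, htop⟩ := eq_of_add_nsmul_eq_add_nsmul (add_sum_nsmul_mem hM' hα l)
      (add_sum_nsmul_mem hM' hα' l') hlk hlk' heq
    obtain ⟨hαα', hll'⟩ := ih hM' (fun i h1 h2 => hl i h1 (by omega))
      (fun i h1 h2 => hl' i h1 (by omega)) hrest
    refine ⟨hαα', fun i h1 h2 => ?_⟩
    rcases (show i ≤ k ∨ i = k + 1 by omega) with hik | rfl
    · exact hll' i h1 hik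
    · exact htop

end MixedRadix

section Recursion

open AddSubgroup

variable {V : Type*} [AddCommGroup V] {lam γ : ℕ → V} {n : ℕ → ℕ} {g : ℕ}

theorem sub_eq_sum_nsmul_of_rec (hγ1 : γ 1 = lam 1)
    (hγrec : ∀ j, 1 ≤ j → j < g → γ (j + 1) = n j • γ j + lam (j + 1) - lam j)
    (hn : ∀ j, 1 ≤ j → j < g → 1 ≤ n j) {j : ℕ} (hj : 1 ≤ j) (hjg : j ≤ g) :
    γ j - lam j = ∑ i ∈ Icc 1 (j - 1), (n i - 1) • γ i := by
  induction j, hj using Nat.le_induction with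
  | base => simp [hγ1]
  | succ j hj ih =>
    have hnγ : n j • γ j = (n j - 1) • γ j + γ j := by
      rw [← succ_nsmul, Nat.sub_add_cancel (hn j hj (by omega))]
    rw [Nat.add_sub_cancel, ← insert_Icc_sub_one_right_eq_Icc hj,
      sum_insert (by rw [mem_Icc]; omega), ← ih (by omega), hγrec j hj (by omega), hnγ]
    abel

theorem mem_of_sub_eq_sum_nsmul (C : AddSubmonoid V)
    (hsub : ∀ j, 1 ≤ j → j ≤ g → γ j - lam j = ∑ i ∈ Icc 1 (j - 1), (n i - 1) • γ i)
    (hlam : ∀ j, 1 ≤ j → j ≤ g → lam j ∈ C) {j : ℕ} (hj : 1 ≤ j) (hjg : j ≤ g) : γ j ∈ C := by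
  induction j using Nat.strong_induction_on with
  | _ j ih =>
    rw [← sub_add_cancel (γ j) (lam j), hsub j hj hjg]
    refine add_mem (sum_mem fun i hi => nsmul_mem ?_ _) (hlam j hj hjg)
    rw [mem_Icc] at hi
    exact ih i (by omega) hi.1 (by omega)

theorem sup_closure_eq_sup_closure_of_rec (M : ℕ → AddSubgroup V) (hγ1 : γ 1 = lam 1)
    (hγrec : ∀ j, 1 ≤ j → j < g → γ (j + 1) = n j • γ j + lam (j + 1) - lam j)
    (hM : ∀ j, 1 ≤ j → j ≤ g → M j = M (j - 1) ⊔ closure {lam j})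
    (hn : ∀ j, 1 ≤ j → j ≤ g → n j = (M (j - 1)).relIndex (M j))
    {j : ℕ} (hj : 1 ≤ j) (hjg : j ≤ g) : M j = M (j - 1) ⊔ closure {γ j} := by
  induction j, hj using Nat.le_induction with
  | base => rw [hγ1]; exact hM 1 le_rfl hjg
  | succ j hj ih =>
    have hnγ : n j • γ j ∈ M j := by
      have := relIndex_sup_closure_nsmul_mem (M (j - 1)) (γ j)
      rw [← ih (by omega), ← hn j hj (by omega)] at this
      rw [hM j hj (by omega)]
      exact mem_sup_left this
    have hlamj : lam j ∈ M j := by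
      rw [hM j hj (by omega)]
      exact mem_sup_right (mem_closure_singleton_self _)
    rw [hM (j + 1) (by omega) hjg]
    refine sup_closure_singleton_eq_of_sub_mem_s9 ?_
    have hsub : γ (j + 1) - lam (j + 1) = n j • γ j - lam j := by
      rw [hγrec j hj (by omega)]; abel
    rw [hsub]
    exact sub_mem hnγ hlamj

theorem mem_of_nsmul_eq_add_sum_nsmul (C : AddSubmonoid V) {j : ℕ}
    (hsub : γ j - lam j = ∑ i ∈ Icc 1 (j - 1), (n i - 1) • γ i)
    (hγ : ∀ i, 1 ≤ i → i ≤ j → γ i ∈ C) (hlam : lam j ∈ C) (hj : 1 ≤ j) (hnj : 1 ≤ n j)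
    {α : V} {l : ℕ → ℕ} (hl : ∀ i, 1 ≤ i → i ≤ j - 1 → l i ≤ n i - 1)
    (heq : n j • γ j = α + ∑ i ∈ Icc 1 (j - 1), l i • γ i) : α ∈ C := by
  have hnγ : n j • γ j = (n j - 1) • γ j + γ j := by
    rw [← succ_nsmul, Nat.sub_add_cancel hnj]
  have hsplit : ∑ i ∈ Icc 1 (j - 1), (n i - 1) • γ i =
      ∑ i ∈ Icc 1 (j - 1), (n i - 1 - l i) • γ i + ∑ i ∈ Icc 1 (j - 1), l i • γ i := by
    rw [← sum_add_distrib]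
    refine sum_congr rfl fun i hi => ?_
    rw [mem_Icc] at hi
    rw [← add_nsmul, Nat.sub_add_cancel (hl i hi.1 hi.2)]
  have hα : α = lam j + (n j - 1) • γ j + ∑ i ∈ Icc 1 (j - 1), (n i - 1 - l i) • γ i :=
    calc α = n j • γ j - ∑ i ∈ Icc 1 (j - 1), l i • γ i := eq_sub_of_add_eq heq.symm
      _ = lam j + (n j - 1) • γ j + (γ j - lam j) - ∑ i ∈ Icc 1 (j - 1), l i • γ i := by
        rw [hnγ]; abel
      _ = _ := by rw [hsub, hsplit]; abel
  rw [hα]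
  refine add_mem (add_mem hlam (nsmul_mem (hγ j hj le_rfl) _)) (sum_mem fun i hi => ?_)
  rw [mem_Icc] at hi
  exact nsmul_mem (hγ i hi.1 (by omega)) _

end Recursion

def ratDualCone {d : ℕ} (ρ : Set (Fin d → ℝ)) : AddSubmonoid (Fin d → ℚ) where
  carrier := {x | qcastR x ∈ dualSet ρ}
  add_mem' {x y} hx hy a ha := by
    have : dotR a (qcastR (x + y)) = dotR a (qcastR x) + dotR a (qcastR y) := by
      simp [dotR, qcastR, mul_add, sum_add_distrib]
    rw [this]
    exact add_nonneg (hx a ha) (hy a ha)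
  zero_mem' a _ := by simp [dotR, qcastR]

theorem intCastHomQ_mem_ratDualCone_iff {d : ℕ} {ρ : Set (Fin d → ℝ)} {a : Fin d → ℤ} :
    intCastHomQ d a ∈ ratDualCone ρ ↔ icastR a ∈ dualSet ρ := by
  have : qcastR (intCastHomQ d a) = icastR a := by
    funext i; simp [qcastR, icastR, intCastHomQ]
  exact this ▸ Iff.rfl

theorem intCastHomQ_injective (d : ℕ) : Function.Injective (intCastHomQ d) :=
  fun a b h => funext fun i => by simpa [intCastHomQ] using congrFun h i

theorem stmt_9_general
    (d g : ℕ)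
    (ρ : Set (Fin d → ℝ))
    (lam : ℕ → Fin d → ℚ)
    (hlam_mem : ∀ j, 1 ≤ j → j ≤ g → qcastR (lam j) ∈ dualSet ρ)
    (Ms : ℕ → AddSubgroup (Fin d → ℚ))
    (hM0 : Ms 0 = zLatQ d)
    (hMs : ∀ j, 1 ≤ j → j ≤ g → Ms j = Ms (j - 1) ⊔ AddSubgroup.closure {lam j})
    (nj : ℕ → ℕ)
    (hnj : ∀ j, 1 ≤ j → j ≤ g → nj j = (Ms (j - 1)).relIndex (Ms j))
    (hnj2 : ∀ j, 1 ≤ j → j ≤ g → 2 ≤ nj j)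
    (γ : ℕ → Fin d → ℚ)
    (hγ1 : γ 1 = lam 1)
    (hγrec : ∀ j, 1 ≤ j → j < g → γ (j + 1) = (nj j : ℚ) • γ j + lam (j + 1) - lam j)
    :
    ∀ j, 1 ≤ j → j ≤ g →
      ((nj j : ℚ) • γ j ∈ GammaSet ρ γ (j - 1)) ∧
      (∃ (α : Fin d → ℤ) (l : ℕ → ℕ),
        icastR α ∈ dualSet ρ ∧
        (∀ i, 1 ≤ i → i ≤ j - 1 → l i ≤ nj i - 1) ∧
        (nj j : ℚ) • γ j
          = intCastHomQ d α + ∑ i ∈ Icc 1 (j - 1), (l i : ℚ) • γ i ∧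
        (∀ (α' : Fin d → ℤ) (l' : ℕ → ℕ),
          (∀ i, 1 ≤ i → i ≤ j - 1 → l' i ≤ nj i - 1) →
          (nj j : ℚ) • γ j
            = intCastHomQ d α' + ∑ i ∈ Icc 1 (j - 1), (l' i : ℚ) • γ i →
          α' = α ∧ ∀ i, 1 ≤ i → i ≤ j - 1 → l' i = l i)) := by
  have hrec : ∀ j, 1 ≤ j → j < g → γ (j + 1) = nj j • γ j + lam (j + 1) - lam j :=
    fun j hj hjg => by rw [hγrec j hj hjg, Nat.cast_smul_eq_nsmul]
  have hnpos : ∀ i, 1 ≤ i → i ≤ g → 1 ≤ nj i := fun i hi hig => by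
    have := hnj2 i hi hig; omega
  have hsub := fun j (hj : 1 ≤ j) (hjg : j ≤ g) =>
    sub_eq_sum_nsmul_of_rec hγ1 hrec (fun i hi hig => hnpos i hi hig.le) hj hjg
  have hMγ := fun j (hj : 1 ≤ j) (hjg : j ≤ g) =>
    sup_closure_eq_sup_closure_of_rec Ms hγ1 hrec hMs hnj hj hjg
  intro j hj hjg
  have hbound : ∀ l : ℕ → ℕ, (∀ i, 1 ≤ i → i ≤ j - 1 → l i ≤ nj i - 1) ↔
      ∀ i, 1 ≤ i → i ≤ j - 1 → l i < (Ms (i - 1)).relIndex (Ms i) := fun l =>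
    forall₃_congr fun i hi hij => by
      rw [← hnj i hi (by omega)]; have := hnpos i hi (by omega); omega
  have hmem : nj j • γ j ∈ Ms (j - 1) := by
    rw [hnj j hj hjg, hMγ j hj hjg]
    exact AddSubgroup.relIndex_sup_closure_nsmul_mem _ _
  have hM' : ∀ i, 1 ≤ i → i ≤ j - 1 → Ms i = Ms (i - 1) ⊔ AddSubgroup.closure {γ i} :=
    fun i hi hij => hMγ i hi (by omega)
  obtain ⟨α, hα, l, hl, heq⟩ := exists_eq_add_sum_nsmul hM'
    (fun i hi hij => by rw [← hnj i hi (by omega)]; have := hnpos i hi (by omega); omega) hmem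
  rw [hM0] at hα
  obtain ⟨a, rfl⟩ := hα
  have ha : icastR a ∈ dualSet ρ := intCastHomQ_mem_ratDualCone_iff.1 <|
    mem_of_nsmul_eq_add_sum_nsmul (ratDualCone ρ) (hsub j hj hjg)
      (fun i hi hij => mem_of_sub_eq_sum_nsmul _ hsub hlam_mem hi (by omega)) (hlam_mem j hj hjg)
      hj (hnpos j hj hjg) ((hbound l).2 hl) heq
  simp only [Nat.cast_smul_eq_nsmul]
  refine ⟨⟨a, l, ha, heq⟩, a, l, ha, (hbound l).2 hl, heq, fun a' l' hl' heq' => ?_⟩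
  obtain ⟨haa', hll'⟩ := eq_of_add_sum_nsmul_eq hM' (hM0 ▸ ⟨a', rfl⟩) (hM0 ▸ ⟨a, rfl⟩)
    ((hbound l').1 hl') hl (heq'.symm.trans heq)
  exact ⟨intCastHomQ_injective d haa', hll'⟩

/-- `n_jγ_j ∈ Γ_{j-1}`, with a unique expression `n_jγ_j = α + Σ l_iγ_i` with `α ∈ M`, `0 ≤ l_i ≤ n_i − 1`; moreover `α ∈ ρ^∨ ∩ M`. -/
theorem stmt_9
    (d g : ℕ) (hd : 1 ≤ d) (hg : 1 ≤ g)
    (ρ : Set (Fin d → ℝ))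
    (hρ : IsRatPolyCone ρ)
    (hρsc : ∀ x ∈ ρ, -x ∈ ρ → x = 0)
    (hρdim : Submodule.span ℝ ρ = ⊤)
    (hdsc : ∀ u ∈ dualSet ρ, -u ∈ dualSet ρ → u = 0)
    (hddim : Submodule.span ℝ (dualSet ρ) = ⊤)
    (lam : ℕ → Fin d → ℚ)
    (hlam_mem : ∀ j, 1 ≤ j → j ≤ g → qcastR (lam j) ∈ dualSet ρ)
    (hlam_lt : ∀ j, 1 ≤ j → j < g → ltRho ρ (lam j) (lam (j + 1)))
    (Ms : ℕ → AddSubgroup (Fin d → ℚ))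
    (hM0 : Ms 0 = zLatQ d)
    (hMs : ∀ j, 1 ≤ j → j ≤ g → Ms j = Ms (j - 1) ⊔ AddSubgroup.closure {lam j})
    (hlam_not : ∀ j, 1 ≤ j → j ≤ g → lam j ∉ Ms (j - 1))
    (nj : ℕ → ℕ)
    (hnj : ∀ j, 1 ≤ j → j ≤ g → nj j = (Ms (j - 1)).relIndex (Ms j))
    (hnj2 : ∀ j, 1 ≤ j → j ≤ g → 2 ≤ nj j)
    (γ : ℕ → Fin d → ℚ)
    (hγ1 : γ 1 = lam 1)
    (hγrec : ∀ j, 1 ≤ j → j < g → γ (j + 1) = (nj j : ℚ) • γ j + lam (j + 1) - lam j)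
    :
    ∀ j, 1 ≤ j → j ≤ g →
      ((nj j : ℚ) • γ j ∈ GammaSet ρ γ (j - 1)) ∧
      (∃ (α : Fin d → ℤ) (l : ℕ → ℕ),
        icastR α ∈ dualSet ρ ∧
        (∀ i, 1 ≤ i → i ≤ j - 1 → l i ≤ nj i - 1) ∧
        (nj j : ℚ) • γ j
          = intCastHomQ d α + ∑ i ∈ Icc 1 (j - 1), (l i : ℚ) • γ i ∧
        (∀ (α' : Fin d → ℤ) (l' : ℕ → ℕ),
          (∀ i, 1 ≤ i → i ≤ j - 1 → l' i ≤ nj i - 1) →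
          (nj j : ℚ) • γ j
            = intCastHomQ d α' + ∑ i ∈ Icc 1 (j - 1), (l' i : ℚ) • γ i →
          α' = α ∧ ∀ i, 1 ≤ i → i ≤ j - 1 → l' i = l i)) :=
  stmt_9_general d g ρ lam hlam_mem Ms hM0 hMs nj hnj hnj2 γ hγ1 hγrec
end

section
/- In the setting below, let α^{(j)} ∈ ρ^∨ ∩ M and 0 ≤ l_i^{(j)} ≤ n_i − 1 be determined by the unique relations n_jγ_j = α^{(j)} + Σ_{i=1}^{j-1} l_i^{(j)}γ_i. Let S := (ρ^∨ ∩ M) × ℕ^g (an additive monoid) and let φ : S → M_g be the monoid homomorphism (α, v) ↦ α + v_1γ_1 + ⋯ + v_gγ_g, whose image is Γ := Γ_g. Then the kernel of the induced surjective ℂ-algebra homomorphism of monoid algebras ℂ[S] → ℂ[Γ] is generated as an ideal by the g binomials h_j := U_j^{n_j} − X^{α^{(j)}} U_1^{l_1^{(j)}} ⋯ U_{j-1}^{l_{j-1}^{(j)}} (j = 1, …, g), where X^α U^v denotes the basis element of ℂ[S] corresponding to (α, v) ∈ S. -/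
/-!
The binomials lie in the kernel because `n_j γ_j = α⁽ʲ⁾ + Σ_i l_i⁽ʲ⁾ γ_i`. Conversely, the kernel of
`ℂ[S] → ℂ[Γ]` is spanned by the differences `X^s − X^t` with `φ s = φ t`, so it suffices that
every monomial is congruent modulo the binomials to a unique monomial in normal form
`v_j < n_j`. Existence: replacing `U_j^{n_j}` by `X^{α⁽ʲ⁾} U^{l⁽ʲ⁾}` strictly decreases the
mixed-radix weight `Σ_k v_k n_1 ⋯ n_{k-1}`, because `l_i⁽ʲ⁾ < n_i`. Uniqueness: `γ_j ≡ λ_j` modulo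
`M_{j-1}` and `M_j = M_{j-1} + ℤλ_j` has index `n_j` over `M_{j-1}`, so `k γ_j ∈ M_{j-1}` iff
`n_j ∣ k`; hence a relation `Σ_j c_j γ_j ∈ M` with `|c_j| < n_j` has all `c_j = 0`, as one sees
by peeling off the top index.
-/

open Finset

/-- The additive monoid `ρ^∨ ∩ M` of lattice points of the dual cone. -/
def Mmon {d : ℕ} (ρ : Set (Fin d → ℝ)) : AddSubmonoid (Fin d → ℤ) where
  carrier := {x | icastR x ∈ dualSet ρ}
  zero_mem' := by
    intro a _
    simp [icastR, dotR]
  add_mem' := by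
    intro x y hx hy a ha
    have h1 := hx a ha
    have h2 := hy a ha
    have heq : dotR a (icastR (x + y)) = dotR a (icastR x) + dotR a (icastR y) := by
      simp only [dotR, icastR, Pi.add_apply, Int.cast_add, mul_add, Finset.sum_add_distrib]
    change 0 ≤ dotR a (icastR (x + y))
    rw [heq]
    positivity

/-- The monoid homomorphism `φ : S = (ρ^∨ ∩ M) × ℕ^g → M_ℚ`, `(α, v) ↦ α + v₁γ₁ + ⋯ + v_gγ_g`. -/
noncomputable def phiS (d g : ℕ) (ρ : Set (Fin d → ℝ)) (γ : ℕ → Fin d → ℚ) :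
    (↥(Mmon ρ) × (Fin g → ℕ)) →+ (Fin d → ℚ) where
  toFun p := intCastHomQ d (p.1 : Fin d → ℤ) + ∑ k : Fin g, (p.2 k : ℚ) • γ ((k : ℕ) + 1)
  map_zero' := by simp
  map_add' p q := by
    simp only [Prod.fst_add, Prod.snd_add, AddSubmonoid.coe_add, map_add, Pi.add_apply,
      Nat.cast_add, add_smul, Finset.sum_add_distrib]
    abel

theorem AddSubgroup.relIndex_sup_closure_singleton_s12 {G : Type*} [AddCommGroup G]
    (H : AddSubgroup G) (y : G) :
    H.relIndex (H ⊔ closure {y}) = addOrderOf (y : G ⧸ H) := by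
  rw [← QuotientAddGroup.ker_mk' H, AddSubgroup.relIndex_ker, AddSubgroup.map_sup,
    AddMonoidHom.map_closure, QuotientAddGroup.ker_mk', QuotientAddGroup.map_mk'_self, bot_sup_eq,
    Set.image_singleton, ← AddSubgroup.zmultiples_eq_closure, Nat.card_zmultiples]
  rfl

theorem AddSubgroup.zsmul_mem_iff_relIndex_sup_dvd_of_sub_mem {G : Type*} [AddCommGroup G]
    {H : AddSubgroup G} {x y : G} (hxy : x - y ∈ H) (k : ℤ) :
    k • x ∈ H ↔ (H.relIndex (H ⊔ closure {y}) : ℤ) ∣ k := by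
  rw [← H.add_mem_cancel_left (zsmul_mem (neg_mem hxy) k), ← smul_add, neg_sub, sub_add_cancel,
    relIndex_sup_closure_singleton_s12, addOrderOf_dvd_iff_zsmul_eq_zero, ← QuotientAddGroup.mk_zsmul,
    QuotientAddGroup.eq_zero_iff]

theorem Nat.sum_mul_prod_range_lt_prod_range {c b : ℕ → ℕ} {m : ℕ} (hc : ∀ i < m, c i < b i) :
    ∑ i ∈ range m, c i * ∏ k ∈ range i, b k < ∏ k ∈ range m, b k := by
  induction m with
  | zero => simp
  | succ m ih =>
    rw [sum_range_succ, prod_range_succ]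
    calc _ < ∏ k ∈ range m, b k + c m * ∏ k ∈ range m, b k :=
          Nat.add_lt_add_right (ih fun i hi => hc i (by omega)) _
      _ = (c m + 1) * ∏ k ∈ range m, b k := by ring
      _ ≤ _ := by rw [mul_comm]; exact Nat.mul_le_mul_left _ (hc m (by omega))

theorem eq_zero_of_sum_zsmul_mem {G : Type*} [AddCommGroup G] {m : ℕ} {M : ℕ → AddSubgroup G}
    (hM : MonotoneOn M (Set.Iic m)) {x : Fin m → G} (hx : ∀ i : Fin m, x i ∈ M ((i : ℕ) + 1))
    {n : Fin m → ℕ} (hn : ∀ (i : Fin m) (k : ℤ), k • x i ∈ M (i : ℕ) ↔ (n i : ℤ) ∣ k)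
    {c : Fin m → ℤ} (hc : ∀ i, |c i| < n i) (hsum : ∑ i, c i • x i ∈ M 0) : c = 0 := by
  induction m with
  | zero => exact Subsingleton.elim _ _
  | succ m ih =>
    have hMm : ∀ i ≤ m, M i ≤ M m := fun i hi =>
      hM (Set.mem_Iic.2 (by omega)) (Set.mem_Iic.2 (by omega)) hi
    rw [Fin.sum_univ_castSucc] at hsum
    have hinit : ∑ i : Fin m, c i.castSucc • x i.castSucc ∈ M m :=
      sum_mem fun i _ => zsmul_mem (hMm _ i.2 (hx i.castSucc)) _
    have hlast : c (Fin.last m) • x (Fin.last m) ∈ M m := by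
      simpa using sub_mem (hMm 0 (Nat.zero_le _) hsum) hinit
    have hlast0 : c (Fin.last m) = 0 :=
      Int.eq_zero_of_abs_lt_dvd ((hn _ _).1 (by simpa using hlast)) (hc _)
    rw [hlast0, zero_smul, add_zero] at hsum
    have hinit0 := ih (hM.mono (Set.Iic_subset_Iic.2 (Nat.le_succ m))) (fun i => hx i.castSucc)
      (fun i => hn i.castSucc) (fun i => hc i.castSucc) hsum
    funext i
    induction i using Fin.lastCases with
    | last => exact hlast0
    | cast i => exact congrFun hinit0 i

namespace AddMonoidAlgebra

variable {R S T : Type*} [CommRing R] [AddCommMonoid S] [AddCommMonoid T]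

theorem sub_mapDomain_mem {I : Ideal R[S]} {h : S → S}
    (hI : ∀ a, single a 1 - single (h a) 1 ∈ I) (x : R[S]) : x - mapDomain h x ∈ I := by
  induction x using induction_linear with
  | zero => simp
  | add x y hx hy => rw [mapDomain_add, add_sub_add_comm]; exact add_mem hx hy
  | single a r =>
    simpa [mul_sub, single_mul_single] using I.mul_mem_left (single 0 r) (hI a)

theorem ker_mapDomainAlgHom_le {f : S →+ T} {I : Ideal R[S]}
    (hI : ∀ a b, f a = f b → single a 1 - single b 1 ∈ I) :
    RingHom.ker (mapDomainAlgHom R R f) ≤ I := by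
  intro x hx
  have hfx : mapDomain f x = 0 := hx
  have hcomp : mapDomain (Function.invFun f ∘ f) x
      = mapDomain (Function.invFun f) (mapDomain f x) := by
    ext; simp [Finsupp.mapDomain_comp]
  have := sub_mapDomain_mem (h := Function.invFun f ∘ f)
    (fun a => hI _ _ (Function.invFun_eq ⟨a, rfl⟩).symm) x
  rwa [hcomp, hfx, mapDomain_zero, sub_zero] at this

theorem single_sub_single_mem_ker_mapDomainAlgHom_iff [Nontrivial R] {f : S →+ T} {a b : S} :
    single a (1 : R) - single b 1 ∈ RingHom.ker (mapDomainAlgHom R R f) ↔ f a = f b := by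
  rw [RingHom.mem_ker, map_sub, sub_eq_zero]
  simp [single_left_inj one_ne_zero]

theorem ker_mapDomainAlgHom_eq_of_injOn [Nontrivial R] {f : S →+ T} {I : Ideal R[S]} {N : Set S}
    (hI : I ≤ RingHom.ker (mapDomainAlgHom R R f)) (hN : Set.InjOn f N)
    (hnf : ∀ s, ∃ t ∈ N, single s 1 - single t 1 ∈ I) :
    RingHom.ker (mapDomainAlgHom R R f) = I := by
  refine le_antisymm (ker_mapDomainAlgHom_le fun a b hab => ?_) hI
  obtain ⟨t, ht, hat⟩ := hnf a
  obtain ⟨t', ht', hbt'⟩ := hnf b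
  have hft : f t = f t' := by
    rw [← single_sub_single_mem_ker_mapDomainAlgHom_iff.1 (hI hat),
      ← single_sub_single_mem_ker_mapDomainAlgHom_iff.1 (hI hbt'), hab]
  rw [← sub_sub_sub_cancel_right _ _ (single t 1), hN ht ht' hft]
  exact sub_mem (hN ht ht' hft ▸ hat) hbt'

theorem exists_single_sub_single_mem_span_of_weight_lt {A : Type*} [AddCommMonoid A] {g : ℕ}
    (n w : Fin g → ℕ) (r : Fin g → A × (Fin g → ℕ))
    (hr : ∀ j, ∑ k, (r j).2 k * w k < n j * w j) (s : A × (Fin g → ℕ)) :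
    ∃ t : A × (Fin g → ℕ), (∀ k, t.2 k < n k) ∧
      single s (1 : R) - single t 1 ∈
        Ideal.span (Set.range fun j => single (0, Pi.single j (n j)) 1 - single (r j) 1) := by
  set I := Ideal.span (Set.range fun j =>
    (single (0, Pi.single j (n j)) 1 - single (r j) 1 : R[A × (Fin g → ℕ)]))
  set μ : (Fin g → ℕ) → ℕ := fun v => ∑ k, v k * w k with hμ
  have hμ_add : ∀ u v, μ (u + v) = μ u + μ v := fun u v => by
    simp [hμ, add_mul, sum_add_distrib]
  have hμ_single : ∀ j, μ (Pi.single j (n j)) = n j * w j := fun j => by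
    simp [hμ, Pi.single_apply]
  induction hN : μ s.2 using Nat.strong_induction_on generalizing s with
  | _ N ih =>
  by_cases hnormal : ∀ k, s.2 k < n k
  · exact ⟨s, hnormal, by simp⟩
  push Not at hnormal
  obtain ⟨j, hj⟩ := hnormal
  set s' : A × (Fin g → ℕ) := (s.1, s.2 - Pi.single j (n j))
  have hs : s = s' + (0, Pi.single j (n j)) := by
    ext k
    · simp [s']
    · by_cases hk : k = j
      · subst hk; simp [s']; omega
      · simp [s', hk]
  have hstep : single s (1 : R) - single (s' + r j) 1 ∈ I := by
    rw [hs, ← one_mul (1 : R), ← single_mul_single, ← single_mul_single, ← mul_sub]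
    exact I.mul_mem_left _ (Ideal.subset_span ⟨j, rfl⟩)
  have hlt : μ (s' + r j).2 < N := by
    rw [Prod.snd_add, hμ_add, ← hN, hs, Prod.snd_add, hμ_add, hμ_single]
    exact Nat.add_lt_add_left (hr j) _
  obtain ⟨t, ht, hmem⟩ := ih _ hlt (s' + r j) rfl
  exact ⟨t, ht, by simpa using add_mem hstep hmem⟩

end AddMonoidAlgebra

theorem monotoneOn_of_eq_sup {G : Type*} [AddCommGroup G] {g : ℕ} {M K : ℕ → AddSubgroup G}
    (hM : ∀ j, 1 ≤ j → j ≤ g → M j = M (j - 1) ⊔ K j) : MonotoneOn M (Set.Iic g) :=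
  monotoneOn_of_le_add_one Set.ordConnected_Iic fun i _ _ hi =>
    (hM (i + 1) (by omega) hi).symm ▸ le_sup_left

theorem gamma_mem_and_sub_mem {G : Type*} [AddCommGroup G] [Module ℚ G] {g : ℕ}
    {M : ℕ → AddSubgroup G} {lam γ : ℕ → G} {n : ℕ → ℕ}
    (hM : ∀ j, 1 ≤ j → j ≤ g → M j = M (j - 1) ⊔ AddSubgroup.closure {lam j})
    (hγ1 : γ 1 = lam 1)
    (hγrec : ∀ j, 1 ≤ j → j < g → γ (j + 1) = (n j : ℚ) • γ j + lam (j + 1) - lam j) :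
    ∀ i < g, γ (i + 1) ∈ M (i + 1) ∧ γ (i + 1) - lam (i + 1) ∈ M i := by
  have hstep : ∀ i < g, M i ≤ M (i + 1) ∧ lam (i + 1) ∈ M (i + 1) := fun i hi => by
    rw [hM (i + 1) (by omega) hi, Nat.add_sub_cancel]
    exact ⟨le_sup_left, AddSubgroup.mem_sup_right (AddSubgroup.mem_closure_singleton_self _)⟩
  intro i hi
  induction i with
  | zero => simpa [hγ1] using (hstep 0 hi).2
  | succ i ih =>
    have hsub : γ (i + 1 + 1) - lam (i + 1 + 1) ∈ M (i + 1) := by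
      have hrec : γ (i + 1 + 1) - lam (i + 1 + 1) = (n (i + 1) : ℚ) • γ (i + 1) - lam (i + 1) := by
        rw [hγrec (i + 1) (by omega) hi]; abel
      rw [hrec, Nat.cast_smul_eq_nsmul]
      exact sub_mem (nsmul_mem (ih (by omega)).1 _) ((hstep i (by omega)).2)
    refine ⟨?_, hsub⟩
    simpa using add_mem ((hstep (i + 1) hi).1 hsub) (hstep (i + 1) hi).2

theorem phiS_apply (d g : ℕ) (ρ : Set (Fin d → ℝ)) (γ : ℕ → Fin d → ℚ)
    (p : ↥(Mmon ρ) × (Fin g → ℕ)) :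
    phiS d g ρ γ p = intCastHomQ d p.1 + ∑ k : Fin g, (p.2 k : ℚ) • γ ((k : ℕ) + 1) :=
  rfl

theorem phiS_injOn {d g : ℕ} {ρ : Set (Fin d → ℝ)} {γ : ℕ → Fin d → ℚ}
    {M : ℕ → AddSubgroup (Fin d → ℚ)} {n : ℕ → ℕ} (hM : MonotoneOn M (Set.Iic g))
    (hM0 : M 0 = zLatQ d) (hγ : ∀ i : Fin g, γ ((i : ℕ) + 1) ∈ M ((i : ℕ) + 1))
    (hdvd : ∀ (i : Fin g) (k : ℤ), k • γ ((i : ℕ) + 1) ∈ M i ↔ (n ((i : ℕ) + 1) : ℤ) ∣ k) :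
    Set.InjOn (phiS d g ρ γ) {s | ∀ k, s.2 k < n ((k : ℕ) + 1)} := by
  rintro ⟨α, v⟩ hv ⟨β, w⟩ hw h
  simp only [Set.mem_ofPred_eq] at hv hw
  rw [phiS_apply, phiS_apply] at h
  have hsum : ∑ k : Fin g, ((v k : ℤ) - w k) • γ ((k : ℕ) + 1) = intCastHomQ d (β - α) := by
    simp only [← Int.cast_smul_eq_zsmul ℚ, Int.cast_sub, Int.cast_natCast, sub_smul,
      sum_sub_distrib, map_sub]
    rw [sub_eq_sub_iff_add_eq_add, add_comm]
    exact h
  have hvw := eq_zero_of_sum_zsmul_mem hM hγ hdvd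
    (c := fun k => (v k : ℤ) - w k) (fun k => by have := hv k; have := hw k; rw [abs_lt]; omega)
    (by rw [hsum, hM0]; exact ⟨_, rfl⟩)
  have hvw' : v = w := funext fun k => by simpa [sub_eq_zero] using congrFun hvw k
  subst hvw'
  rw [add_left_inj] at h
  exact Prod.ext (Subtype.ext (intCastHomQ_injective d h)) rfl

theorem phiS_binomial_eq {d g : ℕ} {ρ : Set (Fin d → ℝ)} {γ : ℕ → Fin d → ℚ} {n : ℕ → ℕ}
    {alph : ℕ → Fin d → ℤ} (halph : ∀ j, icastR (alph j) ∈ dualSet ρ) {lc : ℕ → ℕ → ℕ}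
    (hlc_zero : ∀ j i, i = 0 ∨ j ≤ i → lc j i = 0)
    (hrel : ∀ j, 1 ≤ j → j ≤ g →
      (n j : ℚ) • γ j = intCastHomQ d (alph j) + ∑ i ∈ Icc 1 (j - 1), (lc j i : ℚ) • γ i)
    (j : Fin g) :
    phiS d g ρ γ (0, Pi.single j (n ((j : ℕ) + 1)))
      = phiS d g ρ γ (⟨alph ((j : ℕ) + 1), halph ((j : ℕ) + 1)⟩,
          fun i : Fin g => lc ((j : ℕ) + 1) ((i : ℕ) + 1)) := by
  have hsum : ∑ k : Fin g, (lc ((j : ℕ) + 1) ((k : ℕ) + 1) : ℚ) • γ ((k : ℕ) + 1)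
      = ∑ i ∈ Icc 1 (j : ℕ), (lc ((j : ℕ) + 1) i : ℚ) • γ i := by
    rw [Fin.sum_univ_eq_sum_range (fun k => (lc ((j : ℕ) + 1) (k + 1) : ℚ) • γ (k + 1)),
      ← Ico_add_one_right_eq_Icc, sum_Ico_eq_sum_range, Nat.add_sub_cancel]
    simp_rw [add_comm 1]
    refine (sum_subset (range_subset_range.2 j.2.le) fun k _ hk => ?_).symm
    rw [hlc_zero _ _ (Or.inr (by simp at hk; omega)), Nat.cast_zero, zero_smul]
  rw [phiS_apply, phiS_apply]
  simpa [Pi.single_apply, hsum] using hrel ((j : ℕ) + 1) (by omega) j.2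

theorem sum_lc_mul_prod_lt {g : ℕ} {n : ℕ → ℕ} {lc : ℕ → ℕ → ℕ}
    (hn : ∀ j, 1 ≤ j → j ≤ g → 0 < n j)
    (hlc_bound : ∀ j i, 1 ≤ j → j ≤ g → 1 ≤ i → i ≤ j - 1 → lc j i ≤ n i - 1)
    (hlc_zero : ∀ j i, i = 0 ∨ j ≤ i → lc j i = 0) (j : Fin g) :
    ∑ k : Fin g, lc ((j : ℕ) + 1) ((k : ℕ) + 1) * ∏ i ∈ range k, n (i + 1)
      < n ((j : ℕ) + 1) * ∏ i ∈ range j, n (i + 1) := by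
  rw [Fin.sum_univ_eq_sum_range (fun k => lc ((j : ℕ) + 1) (k + 1) * ∏ i ∈ range k, n (i + 1)),
    ← sum_subset (range_subset_range.2 j.2.le) fun k _ hk => by
      rw [hlc_zero _ _ (Or.inr (by simp at hk; omega)), zero_mul]]
  calc _ < ∏ i ∈ range j, n (i + 1) := Nat.sum_mul_prod_range_lt_prod_range fun k hk => by
        have := hlc_bound ((j : ℕ) + 1) (k + 1) (by omega) j.2 (by omega) (by omega)
        have := hn (k + 1) (by omega) (by omega)
        omega
    _ ≤ _ := Nat.le_mul_of_pos_left _ (hn ((j : ℕ) + 1) (by omega) j.2)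

theorem stmt_12_general
    (d g : ℕ)
    (ρ : Set (Fin d → ℝ))
    (lam : ℕ → Fin d → ℚ)
    (Ms : ℕ → AddSubgroup (Fin d → ℚ))
    (hM0 : Ms 0 = zLatQ d)
    (hMs : ∀ j, 1 ≤ j → j ≤ g → Ms j = Ms (j - 1) ⊔ AddSubgroup.closure {lam j})
    (nj : ℕ → ℕ)
    (hnj : ∀ j, 1 ≤ j → j ≤ g → nj j = (Ms (j - 1)).relIndex (Ms j))
    (hnj2 : ∀ j, 1 ≤ j → j ≤ g → 2 ≤ nj j)
    (γ : ℕ → Fin d → ℚ)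
    (hγ1 : γ 1 = lam 1)
    (hγrec : ∀ j, 1 ≤ j → j < g → γ (j + 1) = (nj j : ℚ) • γ j + lam (j + 1) - lam j)
    (alph : ℕ → Fin d → ℤ)
    (halph : ∀ j, icastR (alph j) ∈ dualSet ρ)
    (lc : ℕ → ℕ → ℕ)
    (hlc_bound : ∀ j i, 1 ≤ j → j ≤ g → 1 ≤ i → i ≤ j - 1 → lc j i ≤ nj i - 1)
    (hlc_zero : ∀ j i, i = 0 ∨ j ≤ i → lc j i = 0)
    (hrel : ∀ j, 1 ≤ j → j ≤ g →
      (nj j : ℚ) • γ j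
        = intCastHomQ d (alph j) + ∑ i ∈ Icc 1 (j - 1), (lc j i : ℚ) • γ i) :
    RingHom.ker (AddMonoidAlgebra.mapDomainAlgHom ℂ ℂ (AddMonoidHom.mrangeRestrict (phiS d g ρ γ)))
      = Ideal.span (α := AddMonoidAlgebra ℂ (↥(Mmon ρ) × (Fin g → ℕ)))
        (Set.range fun j : Fin g =>
          ((AddMonoidAlgebra.single ((0, Pi.single j (nj ((j : ℕ) + 1)))
              : ↥(Mmon ρ) × (Fin g → ℕ)) (1 : ℂ))
          - (AddMonoidAlgebra.single ((⟨alph ((j : ℕ) + 1), halph ((j : ℕ) + 1)⟩,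
              fun i : Fin g => lc ((j : ℕ) + 1) ((i : ℕ) + 1))
              : ↥(Mmon ρ) × (Fin g → ℕ)) (1 : ℂ))
            : AddMonoidAlgebra ℂ (↥(Mmon ρ) × (Fin g → ℕ)))) := by
  have hγ := gamma_mem_and_sub_mem hMs hγ1 hγrec
  have hdvd : ∀ (i : Fin g) (k : ℤ), k • γ ((i : ℕ) + 1) ∈ Ms i ↔ (nj ((i : ℕ) + 1) : ℤ) ∣ k :=
    fun i k => by
      simpa [hnj _ _ i.2, hMs _ _ i.2] using
        AddSubgroup.zsmul_mem_iff_relIndex_sup_dvd_of_sub_mem (hγ i i.2).2 k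
  have hweight := sum_lc_mul_prod_lt (fun j h1 h2 => two_pos.trans_le (hnj2 j h1 h2))
    hlc_bound hlc_zero
  refine AddMonoidAlgebra.ker_mapDomainAlgHom_eq_of_injOn
    (N := {s | ∀ k, s.2 k < nj ((k : ℕ) + 1)}) ?_ ?_
    fun s => AddMonoidAlgebra.exists_single_sub_single_mem_span_of_weight_lt _ _ _ hweight s
  · refine Ideal.span_le.2 ?_
    rintro _ ⟨j, rfl⟩
    exact AddMonoidAlgebra.single_sub_single_mem_ker_mapDomainAlgHom_iff.2
      (Subtype.ext (phiS_binomial_eq halph hlc_zero hrel j))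
  · exact fun s hs t ht hst => phiS_injOn (monotoneOn_of_eq_sup hMs) hM0 (fun i => (hγ i i.2).1)
      hdvd hs ht (congrArg Subtype.val hst)

/-- The kernel of the canonical surjection `ℂ[S] → ℂ[Γ]` is generated by the `g` binomials `U_j^{n_j} − X^{α⁽ʲ⁾}U₁^{l₁⁽ʲ⁾}⋯U_{j-1}^{l_{j-1}⁽ʲ⁾}`. -/
theorem stmt_12
    (d g : ℕ) (hd : 1 ≤ d) (hg : 1 ≤ g)
    (ρ : Set (Fin d → ℝ))
    (hρ : IsRatPolyCone ρ)
    (hρsc : ∀ x ∈ ρ, -x ∈ ρ → x = 0)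
    (hρdim : Submodule.span ℝ ρ = ⊤)
    (hdsc : ∀ u ∈ dualSet ρ, -u ∈ dualSet ρ → u = 0)
    (hddim : Submodule.span ℝ (dualSet ρ) = ⊤)
    (lam : ℕ → Fin d → ℚ)
    (hlam_mem : ∀ j, 1 ≤ j → j ≤ g → qcastR (lam j) ∈ dualSet ρ)
    (hlam_lt : ∀ j, 1 ≤ j → j < g → ltRho ρ (lam j) (lam (j + 1)))
    (Ms : ℕ → AddSubgroup (Fin d → ℚ))
    (hM0 : Ms 0 = zLatQ d)
    (hMs : ∀ j, 1 ≤ j → j ≤ g → Ms j = Ms (j - 1) ⊔ AddSubgroup.closure {lam j})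
    (hlam_not : ∀ j, 1 ≤ j → j ≤ g → lam j ∉ Ms (j - 1))
    (nj : ℕ → ℕ)
    (hnj : ∀ j, 1 ≤ j → j ≤ g → nj j = (Ms (j - 1)).relIndex (Ms j))
    (hnj2 : ∀ j, 1 ≤ j → j ≤ g → 2 ≤ nj j)
    (γ : ℕ → Fin d → ℚ)
    (hγ1 : γ 1 = lam 1)
    (hγrec : ∀ j, 1 ≤ j → j < g → γ (j + 1) = (nj j : ℚ) • γ j + lam (j + 1) - lam j)
    (alph : ℕ → Fin d → ℤ)
    (halph : ∀ j, icastR (alph j) ∈ dualSet ρ)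
    (lc : ℕ → ℕ → ℕ)
    (hlc_bound : ∀ j i, 1 ≤ j → j ≤ g → 1 ≤ i → i ≤ j - 1 → lc j i ≤ nj i - 1)
    (hlc_zero : ∀ j i, i = 0 ∨ j ≤ i → lc j i = 0)
    (hrel : ∀ j, 1 ≤ j → j ≤ g →
      (nj j : ℚ) • γ j
        = intCastHomQ d (alph j) + ∑ i ∈ Icc 1 (j - 1), (lc j i : ℚ) • γ i) :
    RingHom.ker (AddMonoidAlgebra.mapDomainAlgHom ℂ ℂ (AddMonoidHom.mrangeRestrict (phiS d g ρ γ)))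
      = Ideal.span (α := AddMonoidAlgebra ℂ (↥(Mmon ρ) × (Fin g → ℕ)))
        (Set.range fun j : Fin g =>
          ((AddMonoidAlgebra.single ((0, Pi.single j (nj ((j : ℕ) + 1)))
              : ↥(Mmon ρ) × (Fin g → ℕ)) (1 : ℂ))
          - (AddMonoidAlgebra.single ((⟨alph ((j : ℕ) + 1), halph ((j : ℕ) + 1)⟩,
              fun i : Fin g => lc ((j : ℕ) + 1) ((i : ℕ) + 1))
              : ↥(Mmon ρ) × (Fin g → ℕ)) (1 : ℂ))
            : AddMonoidAlgebra ℂ (↥(Mmon ρ) × (Fin g → ℕ)))) :=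
  stmt_12_general d g ρ lam Ms hM0 hMs nj hnj hnj2 γ hγ1 hγrec alph halph lc hlc_bound hlc_zero hrel
end

section
/- In the setting below, set λ_0 := 0, γ_0 := 0, n_0 := 1, let N_j := {a ∈ N : ⟨a, u⟩ ∈ ℤ for all u ∈ M_j} (the dual lattice of M_j), let u_1, …, u_g be the standard basis of the ℝ^g-factor of ℝ^d × ℝ^g, and for 1 ≤ j ≤ g define the cone ρ_j^g := {(a, ⟨a,γ_1⟩, …, ⟨a,γ_j⟩, n_j⟨a,γ_j⟩, n_jn_{j+1}⟨a,γ_j⟩, …, n_j⋯n_{g-1}⟨a,γ_j⟩) : a ∈ ρ} ⊂ ℝ^d × ℝ^g, with ρ_0^g := ρ × {0}. For 1 ≤ j ≤ g let σ_j^- := {(a,v) ∈ ρ × ℝ : 0 ≤ v ≤ ⟨a, λ_j − λ_{j-1}⟩} and σ_j^+ := {(a,v) ∈ ρ × ℝ : v ≥ ⟨a, λ_j − λ_{j-1}⟩ and v ≥ 0}, and define linear maps ξ_j^-, ξ_j^+ : ℝ^d × ℝ → ℝ^d × ℝ^g by ξ_j^-(a,v) := (a, ⟨a,γ_1⟩,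 …, ⟨a,γ_{j-1}⟩, w, n_jw, n_jn_{j+1}w, …, n_j⋯n_{g-1}w) with w := v + n_{j-1}⟨a,γ_{j-1}⟩, and ξ_j^+(a,v) := (a, ⟨a,γ_1⟩, …, ⟨a,γ_{j-1}⟩, v + n_{j-1}⟨a,γ_{j-1}⟩, n_j⟨a,γ_j⟩, n_jn_{j+1}⟨a,γ_j⟩, …, n_j⋯n_{g-1}⟨a,γ_j⟩). Then: (i) ξ_j^- and ξ_j^+ are injective; (ii) ξ_j^-(σ_j^-) equals the Minkowski sum ρ_{j-1}^g + ρ_j^g, and ξ_j^+(σ_j^+) = ρ_j^g + ℝ_{≥0}u_j; (iii) identifying N with ℤ^d, ξ_j^-(N_{j-1} × ℤ) = ξ_j^-(ℝ^d × ℝ) ∩ (ℤ^d × ℤ^g) and ξ_j^+(N_{j-1} × ℤ) = ξ_j^+(ℝ^d × ℝ) ∩ (ℤ^d × ℤ^g). -/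
/-!
Both `ξ_j^±` keep `a` and put `v + n_{j-1}⟨a, γ_{j-1}⟩` into the `j`-th coordinate, which gives
injectivity. By the recursion `γ_j = n_{j-1}γ_{j-1} + λ_j - λ_{j-1}`, `ξ_j^-(a, 0)` is the point of
`ρ_{j-1}^g` over `a` and `ξ_j^±(a, ⟨a, λ_j - λ_{j-1}⟩)` the point of `ρ_j^g` over `a`; as `ξ_j^-` is
linear, splitting `(a, v) = ((1-t)a, 0) + (ta, t⟨a, λ_j - λ_{j-1}⟩)` describes `ξ_j^-(σ_j^-)`, while
`ξ_j^+` moves along `u_j` as `v` grows. For the lattices: `M_{j-1}` is generated by `M` and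
`γ_1, …, γ_{j-1}`, so `b ∈ N_{j-1}` iff the first `j - 1` coordinates `⟨b, γ_i⟩` are integers; the
`j`-th coordinate then makes `v` an integer, and the later ones are integral because
`n_jγ_j ∈ M_{j-1}`.
-/

open Finset

/-- The pairing of `a ∈ ℝ^d` with a rational vector. -/
noncomputable def pairQ {d : ℕ} (a : Fin d → ℝ) (u : Fin d → ℚ) : ℝ := ∑ i, a i * (u i : ℝ)

open Finset in
/-- The cone `ρ_j^g ⊂ ℝ^d × ℝ^g` (with the convention `γ 0 = 0`, so `ρ_0^g = ρ × {0}`). -/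
noncomputable def rhoJG {d : ℕ} (g : ℕ) (ρ : Set (Fin d → ℝ)) (γ : ℕ → Fin d → ℚ)
    (nj : ℕ → ℕ) (j : ℕ) : Set ((Fin d → ℝ) × (Fin g → ℝ)) :=
  {p | ∃ a ∈ ρ, p = (a, fun k : Fin g =>
    if (k : ℕ) + 1 ≤ j then pairQ a (γ ((k : ℕ) + 1))
    else (∏ i ∈ Ico j ((k : ℕ) + 1), (nj i : ℝ)) * pairQ a (γ j))}

/-- The cone `σ_j^- = {(a,v) ∈ ρ × ℝ : 0 ≤ v ≤ ⟨a, λ_j − λ_{j-1}⟩}`. -/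
noncomputable def sigmaMinus {d : ℕ} (ρ : Set (Fin d → ℝ)) (lam : ℕ → Fin d → ℚ) (j : ℕ) :
    Set ((Fin d → ℝ) × ℝ) :=
  {p | p.1 ∈ ρ ∧ 0 ≤ p.2 ∧ p.2 ≤ pairQ p.1 (lam j - lam (j - 1))}

/-- The cone `σ_j^+ = {(a,v) ∈ ρ × ℝ : v ≥ ⟨a, λ_j − λ_{j-1}⟩, v ≥ 0}`. -/
noncomputable def sigmaPlus {d : ℕ} (ρ : Set (Fin d → ℝ)) (lam : ℕ → Fin d → ℚ) (j : ℕ) :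
    Set ((Fin d → ℝ) × ℝ) :=
  {p | p.1 ∈ ρ ∧ 0 ≤ p.2 ∧ pairQ p.1 (lam j - lam (j - 1)) ≤ p.2}

open Finset in
/-- The linear map `ξ_j^-`. -/
noncomputable def xiMinus {d : ℕ} (g : ℕ) (γ : ℕ → Fin d → ℚ) (nj : ℕ → ℕ) (j : ℕ) :
    (Fin d → ℝ) × ℝ → (Fin d → ℝ) × (Fin g → ℝ) :=
  fun p => (p.1, fun k : Fin g =>
    if (k : ℕ) + 1 ≤ j - 1 then pairQ p.1 (γ ((k : ℕ) + 1))
    else (∏ i ∈ Ico j ((k : ℕ) + 1), (nj i : ℝ))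
      * (p.2 + (nj (j - 1) : ℝ) * pairQ p.1 (γ (j - 1))))

open Finset in
/-- The linear map `ξ_j^+`. -/
noncomputable def xiPlus {d : ℕ} (g : ℕ) (γ : ℕ → Fin d → ℚ) (nj : ℕ → ℕ) (j : ℕ) :
    (Fin d → ℝ) × ℝ → (Fin d → ℝ) × (Fin g → ℝ) :=
  fun p => (p.1, fun k : Fin g =>
    if (k : ℕ) + 1 ≤ j - 1 then pairQ p.1 (γ ((k : ℕ) + 1))
    else if (k : ℕ) + 1 = j then p.2 + (nj (j - 1) : ℝ) * pairQ p.1 (γ (j - 1))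
    else (∏ i ∈ Ico j ((k : ℕ) + 1), (nj i : ℝ)) * pairQ p.1 (γ j))

/-- The dual lattice `N_j = {a ∈ N : ⟨a, u⟩ ∈ ℤ for all u ∈ M_j}`. -/
def Nlat {d : ℕ} (Ms : ℕ → AddSubgroup (Fin d → ℚ)) (j : ℕ) : Set (Fin d → ℤ) :=
  {a | ∀ u ∈ Ms j, ∃ z : ℤ, ∑ i, (a i : ℚ) * u i = (z : ℚ)}

section Pairing

variable {d : ℕ}

lemma pairQ_add_left (a b : Fin d → ℝ) (u : Fin d → ℚ) :
    pairQ (a + b) u = pairQ a u + pairQ b u := by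
  simp only [pairQ, Pi.add_apply, add_mul, sum_add_distrib]

lemma pairQ_smul_left (c : ℝ) (a : Fin d → ℝ) (u : Fin d → ℚ) :
    pairQ (c • a) u = c * pairQ a u := by
  simp only [pairQ, Pi.smul_apply, smul_eq_mul, mul_sum, mul_assoc]

lemma pairQ_add_right (a : Fin d → ℝ) (u v : Fin d → ℚ) :
    pairQ a (u + v) = pairQ a u + pairQ a v := by
  simp only [pairQ, Pi.add_apply, Rat.cast_add, mul_add, sum_add_distrib]

lemma pairQ_smul_right (a : Fin d → ℝ) (q : ℚ) (u : Fin d → ℚ) :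
    pairQ a (q • u) = q * pairQ a u := by
  simp only [pairQ, Pi.smul_apply, smul_eq_mul, Rat.cast_mul, mul_sum]
  exact sum_congr rfl fun i _ => by ring

def intPairing (b : Fin d → ℤ) : (Fin d → ℚ) →+ ℚ where
  toFun u := ∑ i, (b i : ℚ) * u i
  map_zero' := by simp
  map_add' u v := by simp only [Pi.add_apply, mul_add, sum_add_distrib]

def integralVectors (b : Fin d → ℤ) : AddSubgroup (Fin d → ℚ) :=
  (Int.castAddHom ℚ).range.comap (intPairing b)

lemma mem_integralVectors {b : Fin d → ℤ} {u : Fin d → ℚ} :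
    u ∈ integralVectors b ↔ ∃ z : ℤ, intPairing b u = z :=
  exists_congr fun _ => eq_comm

lemma mem_Nlat_iff_le {Ms : ℕ → AddSubgroup (Fin d → ℚ)} {j : ℕ} {b : Fin d → ℤ} :
    b ∈ Nlat Ms j ↔ Ms j ≤ integralVectors b := by
  simp only [Nlat, SetLike.le_def, mem_integralVectors]
  rfl

lemma zLatQ_le_integralVectors (b : Fin d → ℤ) : zLatQ d ≤ integralVectors b := by
  rintro _ ⟨x, rfl⟩
  exact ⟨∑ i, b i * x i, by simp [intPairing, intCastHomQ]⟩

lemma pairQ_icastR (b : Fin d → ℤ) (u : Fin d → ℚ) :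
    pairQ (icastR b) u = (intPairing b u : ℝ) := by
  simp [pairQ, icastR, intPairing]

lemma exists_int_pairQ_of_mem {b : Fin d → ℤ} {u : Fin d → ℚ} (hu : u ∈ integralVectors b) :
    ∃ w : ℤ, pairQ (icastR b) u = w := by
  obtain ⟨w, hw⟩ := mem_integralVectors.1 hu
  exact ⟨w, by rw [pairQ_icastR, hw, Rat.cast_intCast]⟩

end Pairing

section Cone

variable {d : ℕ}

lemma nonnegSpan_add_mem {s : Set (Fin d → ℝ)} {x y : Fin d → ℝ}
    (hx : x ∈ nonnegSpan s) (hy : y ∈ nonnegSpan s) : x + y ∈ nonnegSpan s := by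
  obtain ⟨n, c, v, hc, hv, rfl⟩ := hx
  obtain ⟨m, c', v', hc', hv', rfl⟩ := hy
  refine ⟨n + m, Fin.append c c', Fin.append v v', fun i => ?_, fun i => ?_, ?_⟩
  · exact Fin.addCases (fun i => by simpa using hc i) (fun i => by simpa using hc' i) i
  · exact Fin.addCases (fun i => by simpa using hv i) (fun i => by simpa using hv' i) i
  · simp [Fin.sum_univ_add]

lemma nonnegSpan_smul_mem {s : Set (Fin d → ℝ)} {t : ℝ} (ht : 0 ≤ t) {x : Fin d → ℝ}
    (hx : x ∈ nonnegSpan s) : t • x ∈ nonnegSpan s := by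
  obtain ⟨n, c, v, hc, hv, rfl⟩ := hx
  exact ⟨n, fun i => t * c i, v, fun i => mul_nonneg ht (hc i), hv, by simp [smul_sum, smul_smul]⟩

lemma IsRatPolyCone.add_mem {ρ : Set (Fin d → ℝ)} (hρ : IsRatPolyCone ρ) {x y : Fin d → ℝ}
    (hx : x ∈ ρ) (hy : y ∈ ρ) : x + y ∈ ρ := by
  obtain ⟨s, rfl⟩ := hρ
  exact nonnegSpan_add_mem hx hy

lemma IsRatPolyCone.smul_mem {ρ : Set (Fin d → ℝ)} (hρ : IsRatPolyCone ρ) {t : ℝ} (ht : 0 ≤ t)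
    {x : Fin d → ℝ} (hx : x ∈ ρ) : t • x ∈ ρ := by
  obtain ⟨s, rfl⟩ := hρ
  exact nonnegSpan_smul_mem ht hx

end Cone

section Xi

variable {d g : ℕ} (γ : ℕ → Fin d → ℚ) (nj : ℕ → ℕ) {j : ℕ}

noncomputable def rhoEmb (g : ℕ) (j : ℕ) (a : Fin d → ℝ) : (Fin d → ℝ) × (Fin g → ℝ) :=
  (a, fun k : Fin g =>
    if (k : ℕ) + 1 ≤ j then pairQ a (γ ((k : ℕ) + 1))
    else (∏ i ∈ Ico j ((k : ℕ) + 1), (nj i : ℝ)) * pairQ a (γ j))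

lemma rhoJG_eq_image (ρ : Set (Fin d → ℝ)) (j : ℕ) :
    rhoJG g ρ γ nj j = rhoEmb γ nj g j '' ρ := by
  ext p
  exact ⟨fun ⟨a, ha, h⟩ => ⟨a, ha, h.symm⟩, fun ⟨a, ha, h⟩ => ⟨a, ha, h.symm⟩⟩

lemma xiMinus_add (p q : (Fin d → ℝ) × ℝ) :
    xiMinus g γ nj j (p + q) = xiMinus g γ nj j p + xiMinus g γ nj j q := by
  refine Prod.ext rfl (funext fun k => ?_)
  simp only [xiMinus, Prod.fst_add, Prod.snd_add, Pi.add_apply, pairQ_add_left]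
  split_ifs <;> ring

lemma xiMinus_zero (hj : 1 ≤ j) (a : Fin d → ℝ) :
    xiMinus g γ nj j (a, 0) = rhoEmb γ nj g (j - 1) a := by
  refine Prod.ext rfl (funext fun k => ?_)
  simp only [xiMinus, rhoEmb, zero_add]
  split_ifs with hk
  · rfl
  · rw [prod_eq_prod_Ico_succ_bot (by omega : j - 1 < (k : ℕ) + 1), Nat.sub_add_cancel hj]
    ring

lemma pairQ_gamma_of_eq {δ : Fin d → ℚ} (hγ : γ j = (nj (j - 1) : ℚ) • γ (j - 1) + δ)
    (a : Fin d → ℝ) : pairQ a δ + nj (j - 1) * pairQ a (γ (j - 1)) = pairQ a (γ j) := by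
  rw [hγ, pairQ_add_right, pairQ_smul_right, Rat.cast_natCast]
  ring

lemma xiMinus_pairQ (hj : 1 ≤ j) {δ : Fin d → ℚ}
    (hγ : γ j = (nj (j - 1) : ℚ) • γ (j - 1) + δ) (a : Fin d → ℝ) :
    xiMinus g γ nj j (a, pairQ a δ) = rhoEmb γ nj g j a := by
  refine Prod.ext rfl (funext fun k => ?_)
  simp only [xiMinus, rhoEmb, pairQ_gamma_of_eq γ nj hγ]
  by_cases hk : (k : ℕ) + 1 ≤ j - 1
  · rw [if_pos hk, if_pos (by omega)]
  · by_cases hkj : (k : ℕ) + 1 = j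
    · rw [if_neg hk, if_pos hkj.le, hkj, Ico_self, prod_empty, one_mul]
    · rw [if_neg hk, if_neg (by omega)]

lemma xiPlus_pairQ (hj : 1 ≤ j) {δ : Fin d → ℚ}
    (hγ : γ j = (nj (j - 1) : ℚ) • γ (j - 1) + δ) (a : Fin d → ℝ) :
    xiPlus g γ nj j (a, pairQ a δ) = rhoEmb γ nj g j a := by
  refine Prod.ext rfl (funext fun k => ?_)
  simp only [xiPlus, rhoEmb, pairQ_gamma_of_eq γ nj hγ]
  by_cases hk : (k : ℕ) + 1 ≤ j - 1
  · rw [if_pos hk, if_pos (by omega)]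
  · by_cases hkj : (k : ℕ) + 1 = j
    · rw [if_neg hk, if_pos hkj, if_pos hkj.le, hkj]
    · rw [if_neg hk, if_neg hkj, if_neg (by omega)]

lemma xiPlus_add_snd (hj : 1 ≤ j) (hjg : j ≤ g) (a : Fin d → ℝ) (v c : ℝ) :
    xiPlus g γ nj j (a, v + c)
      = xiPlus g γ nj j (a, v) + c • ((0, Pi.single (⟨j - 1, by omega⟩ : Fin g) (1 : ℝ))
          : (Fin d → ℝ) × (Fin g → ℝ)) := by
  refine Prod.ext (by simp [xiPlus]) (funext fun k => ?_)
  simp only [xiPlus, Prod.snd_add, Prod.smul_snd, Pi.add_apply, Pi.smul_apply, smul_eq_mul]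
  by_cases hkj : (k : ℕ) + 1 = j
  · have hk : k = ⟨j - 1, by omega⟩ := Fin.ext (by simp only; omega)
    simp only [if_neg (show ¬((k : ℕ) + 1 ≤ j - 1) by omega), if_pos hkj]
    rw [hk, Pi.single_eq_same]
    ring
  · rw [Pi.single_eq_of_ne (Fin.ne_of_val_ne (by simp; omega))]
    split_ifs <;> ring

lemma xiMinus_apply_of_le (p : (Fin d → ℝ) × ℝ) (k : Fin g) (hk : (k : ℕ) + 1 ≤ j - 1) :
    (xiMinus g γ nj j p).2 k = pairQ p.1 (γ ((k : ℕ) + 1)) :=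
  if_pos hk

lemma xiPlus_apply_of_le (p : (Fin d → ℝ) × ℝ) (k : Fin g) (hk : (k : ℕ) + 1 ≤ j - 1) :
    (xiPlus g γ nj j p).2 k = pairQ p.1 (γ ((k : ℕ) + 1)) :=
  if_pos hk

lemma xiMinus_apply_pred (hj : 1 ≤ j) (hjg : j ≤ g) (p : (Fin d → ℝ) × ℝ) :
    (xiMinus g γ nj j p).2 ⟨j - 1, by omega⟩ = p.2 + nj (j - 1) * pairQ p.1 (γ (j - 1)) := by
  simp [xiMinus, Nat.sub_add_cancel hj]

lemma xiPlus_apply_pred (hj : 1 ≤ j) (hjg : j ≤ g) (p : (Fin d → ℝ) × ℝ) :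
    (xiPlus g γ nj j p).2 ⟨j - 1, by omega⟩ = p.2 + nj (j - 1) * pairQ p.1 (γ (j - 1)) := by
  simp [xiPlus, Nat.sub_add_cancel hj]

lemma xiMinus_apply_int {b : Fin d → ℤ} (hb : ∀ i ≤ j - 1, γ i ∈ integralVectors b)
    (z : ℤ) (k : Fin g) : ∃ c : ℤ, (xiMinus g γ nj j (icastR b, z)).2 k = c := by
  by_cases hk : (k : ℕ) + 1 ≤ j - 1
  · obtain ⟨w, hw⟩ := exists_int_pairQ_of_mem (hb _ hk)
    exact ⟨w, by rw [xiMinus_apply_of_le γ nj _ k hk, hw]⟩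
  · obtain ⟨w, hw⟩ := exists_int_pairQ_of_mem (hb (j - 1) le_rfl)
    refine ⟨(∏ i ∈ Ico j ((k : ℕ) + 1), (nj i : ℤ)) * (z + nj (j - 1) * w), ?_⟩
    simp only [xiMinus, if_neg hk, hw]
    push_cast
    ring

lemma xiPlus_apply_int {b : Fin d → ℤ} (hb : ∀ i ≤ j - 1, γ i ∈ integralVectors b)
    (hbj : (nj j : ℚ) • γ j ∈ integralVectors b) (z : ℤ) (k : Fin g) :
    ∃ c : ℤ, (xiPlus g γ nj j (icastR b, z)).2 k = c := by
  by_cases hk : (k : ℕ) + 1 ≤ j - 1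
  · obtain ⟨w, hw⟩ := exists_int_pairQ_of_mem (hb _ hk)
    exact ⟨w, by rw [xiPlus_apply_of_le γ nj _ k hk, hw]⟩
  by_cases hkj : (k : ℕ) + 1 = j
  · obtain ⟨w, hw⟩ := exists_int_pairQ_of_mem (hb (j - 1) le_rfl)
    refine ⟨z + nj (j - 1) * w, ?_⟩
    simp only [xiPlus, if_neg hk, if_pos hkj, hw]
    push_cast
    ring
  · obtain ⟨w, hw⟩ := exists_int_pairQ_of_mem hbj
    rw [pairQ_smul_right, Rat.cast_natCast] at hw
    refine ⟨(∏ i ∈ Ico (j + 1) ((k : ℕ) + 1), (nj i : ℤ)) * w, ?_⟩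
    simp only [xiPlus, if_neg hk, if_neg hkj]
    rw [prod_eq_prod_Ico_succ_bot (by omega : j < (k : ℕ) + 1), mul_comm (nj j : ℝ), mul_assoc,
      hw]
    push_cast
    rfl

end Xi

lemma injective_of_fst_of_apply_eq_add {α β : Type*} {F : α × ℝ → α × (β → ℝ)} (k : β)
    (φ : α → ℝ) (hfst : ∀ p, (F p).1 = p.1) (hk : ∀ p, (F p).2 k = p.2 + φ p.1) :
    Function.Injective F := by
  intro p q h
  have h1 : p.1 = q.1 := by rw [← hfst p, ← hfst q, h]
  have h2 := hk p
  rw [h, hk q, h1] at h2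
  exact Prod.ext h1 (by linarith)

section Lattice

variable {d g : ℕ} {γ : ℕ → Fin d → ℚ} {nj : ℕ → ℕ} {Ms : ℕ → AddSubgroup (Fin d → ℚ)} {j : ℕ}

/-- Integrality of the coordinates `⟨b, γ_i⟩` (`i < j`) and of the `j`-th coordinate
`v + n_{j-1}⟨b, γ_{j-1}⟩` of `F (b, v)` forces `b ∈ N_{j-1}` and then `v ∈ ℤ`. -/
lemma image_lattice_eq_range_inter {F : (Fin d → ℝ) × ℝ → (Fin d → ℝ) × (Fin g → ℝ)}
    (hj : 1 ≤ j) (hjg : j ≤ g) (hγ0 : γ 0 = 0)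
    (hNlat : ∀ b, b ∈ Nlat Ms (j - 1) ↔ ∀ i ≤ j - 1, γ i ∈ integralVectors b)
    (hfst : ∀ p, (F p).1 = p.1)
    (hle : ∀ p (k : Fin g), (k : ℕ) + 1 ≤ j - 1 → (F p).2 k = pairQ p.1 (γ ((k : ℕ) + 1)))
    (hpred : ∀ p, (F p).2 ⟨j - 1, by omega⟩ = p.2 + nj (j - 1) * pairQ p.1 (γ (j - 1)))
    (hint : ∀ b ∈ Nlat Ms (j - 1), ∀ (z : ℤ) (k : Fin g), ∃ c : ℤ, (F (icastR b, z)).2 k = c) :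
    F '' {p : (Fin d → ℝ) × ℝ | (∃ b ∈ Nlat Ms (j - 1), p.1 = icastR b) ∧ ∃ z : ℤ, p.2 = z}
      = Set.range F
          ∩ {q | ∃ (b : Fin d → ℤ) (c : Fin g → ℤ), q = (icastR b, fun k => (c k : ℝ))} := by
  ext x
  constructor
  · rintro ⟨p, ⟨⟨b, hb, hp1⟩, z, hp2⟩, rfl⟩
    obtain rfl : p = (icastR b, (z : ℝ)) := Prod.ext hp1 hp2
    choose c hc using hint b hb z
    exact ⟨⟨_, rfl⟩, b, c, Prod.ext (hfst _) (funext hc)⟩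
  · rintro ⟨⟨p, rfl⟩, b, c, hq⟩
    have hp1 : p.1 = icastR b := (hfst p).symm.trans (congrArg Prod.fst hq)
    have hc : ∀ k, (F p).2 k = c k := fun k => congrFun (congrArg Prod.snd hq) k
    have hb : b ∈ Nlat Ms (j - 1) := by
      refine (hNlat b).2 fun i hi => ?_
      obtain rfl | hi0 := Nat.eq_zero_or_pos i
      · rw [hγ0]
        exact zero_mem _
      have hci := hc ⟨i - 1, by omega⟩
      rw [hle p _ (by simp only; omega), hp1, pairQ_icastR] at hci
      simp only [Nat.sub_add_cancel hi0] at hci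
      exact mem_integralVectors.2 ⟨_, by exact_mod_cast hci⟩
    obtain ⟨w, hw⟩ := exists_int_pairQ_of_mem ((hNlat b).1 hb (j - 1) le_rfl)
    have hcj := hc ⟨j - 1, by omega⟩
    rw [hpred, hp1, hw] at hcj
    refine ⟨p, ⟨⟨b, hb, hp1⟩, c ⟨j - 1, by omega⟩ - nj (j - 1) * w, ?_⟩, rfl⟩
    push_cast
    linarith

end Lattice

section Images

variable {d g : ℕ} {ρ : Set (Fin d → ℝ)} {lam γ : ℕ → Fin d → ℚ} {nj : ℕ → ℕ} {j : ℕ}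

lemma image_sigmaMinus (hj : 1 ≤ j)
    (hγ : γ j = (nj (j - 1) : ℚ) • γ (j - 1) + (lam j - lam (j - 1)))
    (hL : ∀ a ∈ ρ, 0 ≤ pairQ a (lam j - lam (j - 1)))
    (hadd : ∀ a ∈ ρ, ∀ b ∈ ρ, a + b ∈ ρ) (hsmul : ∀ t : ℝ, 0 ≤ t → ∀ a ∈ ρ, t • a ∈ ρ) :
    xiMinus g γ nj j '' sigmaMinus ρ lam j
      = {x | ∃ y ∈ rhoJG g ρ γ nj (j - 1), ∃ z ∈ rhoJG g ρ γ nj j, x = y + z} := by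
  simp only [rhoJG_eq_image]
  ext x
  constructor
  · rintro ⟨⟨a, v⟩, ⟨ha, hv0, hvL⟩, rfl⟩
    set L := pairQ a (lam j - lam (j - 1))
    -- `(a, v) = ((1 - t) a, 0) + (t a, t L)`; if `L = 0` then `v = 0` and `t = 0 / 0 = 0`.
    set t := v / L
    have hv : t * L = v := div_mul_cancel_of_imp fun h => le_antisymm (h ▸ hvL) hv0
    have ht0 : 0 ≤ t := div_nonneg hv0 (hL a ha)
    have ht1 : t ≤ 1 := div_le_one_of_le₀ hvL (hL a ha)
    refine ⟨_, ⟨(1 - t) • a, hsmul _ (by linarith) a ha, rfl⟩,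
      _, ⟨t • a, hsmul t ht0 a ha, rfl⟩, ?_⟩
    rw [← xiMinus_zero γ nj hj, ← xiMinus_pairQ γ nj hj hγ, ← xiMinus_add, pairQ_smul_left, hv,
      Prod.mk_add_mk, ← add_smul, sub_add_cancel, one_smul, zero_add]
  · rintro ⟨_, ⟨a₁, ha₁, rfl⟩, _, ⟨a₂, ha₂, rfl⟩, rfl⟩
    refine ⟨(a₁ + a₂, pairQ a₂ (lam j - lam (j - 1))), ⟨hadd a₁ ha₁ a₂ ha₂, hL a₂ ha₂, ?_⟩, ?_⟩
    · rw [pairQ_add_left]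
      linarith [hL a₁ ha₁]
    · rw [← xiMinus_zero γ nj hj, ← xiMinus_pairQ γ nj hj hγ, ← xiMinus_add]
      simp only [Prod.mk_add_mk, zero_add]

lemma image_sigmaPlus (hj : 1 ≤ j) (hjg : j ≤ g)
    (hγ : γ j = (nj (j - 1) : ℚ) • γ (j - 1) + (lam j - lam (j - 1)))
    (hL : ∀ a ∈ ρ, 0 ≤ pairQ a (lam j - lam (j - 1))) :
    xiPlus g γ nj j '' sigmaPlus ρ lam j
      = {x | ∃ y ∈ rhoJG g ρ γ nj j, ∃ c : ℝ, 0 ≤ c ∧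
          x = y + c • ((0, Pi.single (⟨j - 1, by omega⟩ : Fin g) (1 : ℝ))
            : (Fin d → ℝ) × (Fin g → ℝ))} := by
  simp only [rhoJG_eq_image]
  ext x
  constructor
  · rintro ⟨⟨a, v⟩, ⟨ha, -, hvL⟩, rfl⟩
    refine ⟨_, ⟨a, ha, rfl⟩, v - pairQ a (lam j - lam (j - 1)), sub_nonneg.2 hvL, ?_⟩
    rw [← xiPlus_pairQ γ nj hj hγ, ← xiPlus_add_snd γ nj hj hjg, add_sub_cancel]
  · rintro ⟨_, ⟨a, ha, rfl⟩, c, hc, rfl⟩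
    refine ⟨(a, pairQ a (lam j - lam (j - 1)) + c), ⟨ha, by linarith [hL a ha], by linarith⟩, ?_⟩
    rw [xiPlus_add_snd γ nj hj hjg, xiPlus_pairQ γ nj hj hγ]

end Images

section Tower

variable {d g : ℕ} {lam γ : ℕ → Fin d → ℚ} {nj : ℕ → ℕ} {Ms : ℕ → AddSubgroup (Fin d → ℚ)}

lemma gamma_eq_of_rec (hγ1 : γ 1 = lam 1)
    (hγrec : ∀ j, 1 ≤ j → j < g → γ (j + 1) = (nj j : ℚ) • γ j + lam (j + 1) - lam j)
    (hlam0 : lam 0 = 0) (hγ0 : γ 0 = 0) {j : ℕ} (hj : 1 ≤ j) (hjg : j ≤ g) :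
    γ j = (nj (j - 1) : ℚ) • γ (j - 1) + (lam j - lam (j - 1)) := by
  obtain rfl | hj1 := hj.eq_or_lt
  · simp [hγ1, hγ0, hlam0]
  · obtain ⟨i, rfl⟩ : ∃ i, j = i + 1 := ⟨j - 1, by omega⟩
    rw [hγrec i (by omega) (by omega), Nat.add_sub_cancel, add_sub_assoc]

lemma lam_sub_pred_mem_dualSet {ρ : Set (Fin d → ℝ)} (hlam0 : lam 0 = 0)
    (hlam_mem : ∀ j, 1 ≤ j → j ≤ g → qcastR (lam j) ∈ dualSet ρ)
    (hlam_lt : ∀ j, 1 ≤ j → j < g → ltRho ρ (lam j) (lam (j + 1)))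
    {j : ℕ} (hj : 1 ≤ j) (hjg : j ≤ g) : qcastR (lam j - lam (j - 1)) ∈ dualSet ρ := by
  obtain rfl | hj1 := hj.eq_or_lt
  · simpa [hlam0] using hlam_mem 1 le_rfl hjg
  · have h := (hlam_lt (j - 1) (by omega) (by omega)).1
    rwa [leRho, Nat.sub_add_cancel hj] at h

lemma Ms_mono (hMs : ∀ j, 1 ≤ j → j ≤ g → Ms j = Ms (j - 1) ⊔ AddSubgroup.closure {lam j})
    {i i' : ℕ} (h : i ≤ i') (hi' : i' ≤ g) : Ms i ≤ Ms i' := by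
  induction i', h using Nat.le_induction with
  | base => exact le_rfl
  | succ n _ ih =>
    rw [hMs (n + 1) (by omega) hi', Nat.add_sub_cancel]
    exact (ih (by omega)).trans le_sup_left

lemma lam_mem_Ms_s19 (hMs : ∀ j, 1 ≤ j → j ≤ g → Ms j = Ms (j - 1) ⊔ AddSubgroup.closure {lam j})
    (hlam0 : lam 0 = 0) {i : ℕ} (hi : i ≤ g) : lam i ∈ Ms i := by
  obtain rfl | hi0 := Nat.eq_zero_or_pos i
  · rw [hlam0]
    exact zero_mem _
  · rw [hMs i hi0 hi]
    exact AddSubgroup.mem_sup_right (AddSubgroup.subset_closure rfl)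

lemma gamma_mem_Ms_s19 (hMs : ∀ j, 1 ≤ j → j ≤ g → Ms j = Ms (j - 1) ⊔ AddSubgroup.closure {lam j})
    (hlam0 : lam 0 = 0) (hγ0 : γ 0 = 0)
    (hγ : ∀ j, 1 ≤ j → j ≤ g → γ j = (nj (j - 1) : ℚ) • γ (j - 1) + (lam j - lam (j - 1)))
    {i : ℕ} (hi : i ≤ g) : γ i ∈ Ms i := by
  induction i with
  | zero =>
    rw [hγ0]
    exact zero_mem _
  | succ i ih =>
    have hle := Ms_mono hMs (Nat.le_succ i) hi
    rw [hγ (i + 1) (by omega) hi, Nat.add_sub_cancel, Nat.cast_smul_eq_nsmul]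
    exact add_mem (hle (nsmul_mem (ih (by omega)) _))
      (sub_mem (lam_mem_Ms_s19 hMs hlam0 hi) (hle (lam_mem_Ms_s19 hMs hlam0 (by omega))))

/-- `n_i = [M_i : M_{i-1}]` kills `M_i / M_{i-1}`, and `γ_i ≡ λ_i` modulo `M_{i-1}`. -/
lemma nsmul_gamma_mem_Ms_pred
    (hMs : ∀ j, 1 ≤ j → j ≤ g → Ms j = Ms (j - 1) ⊔ AddSubgroup.closure {lam j})
    (hnj : ∀ j, 1 ≤ j → j ≤ g → nj j = (Ms (j - 1)).relIndex (Ms j))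
    (hlam0 : lam 0 = 0) (hγ0 : γ 0 = 0)
    (hγ : ∀ j, 1 ≤ j → j ≤ g → γ j = (nj (j - 1) : ℚ) • γ (j - 1) + (lam j - lam (j - 1)))
    {i : ℕ} (hi : 1 ≤ i) (hig : i ≤ g) : (nj i : ℚ) • γ i ∈ Ms (i - 1) := by
  have hpred : (nj (i - 1) : ℚ) • γ (i - 1) - lam (i - 1) ∈ Ms (i - 1) := by
    rw [Nat.cast_smul_eq_nsmul]
    exact sub_mem (nsmul_mem (gamma_mem_Ms_s19 hMs hlam0 hγ0 hγ (by omega)) _)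
      (lam_mem_Ms_s19 hMs hlam0 (by omega))
  have hlam : nj i • lam i ∈ Ms (i - 1) := by
    rw [hnj i hi hig]
    exact AddSubgroup.nsmul_relIndex_mem _ (lam_mem_Ms_s19 hMs hlam0 hig)
  rw [hγ i hi hig, show (nj (i - 1) : ℚ) • γ (i - 1) + (lam i - lam (i - 1))
      = ((nj (i - 1) : ℚ) • γ (i - 1) - lam (i - 1)) + lam i by abel,
    smul_add, Nat.cast_smul_eq_nsmul, Nat.cast_smul_eq_nsmul]
  exact add_mem (nsmul_mem hpred _) hlam

lemma Ms_le_of_gamma_mem (hM0 : Ms 0 = zLatQ d)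
    (hMs : ∀ j, 1 ≤ j → j ≤ g → Ms j = Ms (j - 1) ⊔ AddSubgroup.closure {lam j})
    (hlam0 : lam 0 = 0)
    (hγ : ∀ j, 1 ≤ j → j ≤ g → γ j = (nj (j - 1) : ℚ) • γ (j - 1) + (lam j - lam (j - 1)))
    {H : AddSubgroup (Fin d → ℚ)} (hZ : zLatQ d ≤ H) {m : ℕ} (hm : m ≤ g)
    (hH : ∀ i ≤ m, γ i ∈ H) : Ms m ≤ H := by
  have hlam : ∀ i ≤ m, lam i ∈ H := by
    intro i hi
    induction i with
    | zero =>
      rw [hlam0]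
      exact zero_mem H
    | succ i ih =>
      have h := hγ (i + 1) (by omega) (by omega)
      rw [Nat.add_sub_cancel] at h
      rw [show lam (i + 1) = γ (i + 1) - (nj i : ℚ) • γ i + lam i by rw [h]; abel,
        Nat.cast_smul_eq_nsmul]
      exact add_mem (sub_mem (hH _ hi) (nsmul_mem (hH i (by omega)) _)) (ih (by omega))
  suffices ∀ i ≤ m, Ms i ≤ H from this m le_rfl
  intro i hi
  induction i with
  | zero => exact hM0 ▸ hZ
  | succ i ih =>
    rw [hMs (i + 1) (by omega) (by omega), Nat.add_sub_cancel]
    exact sup_le (ih (by omega))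
      ((AddSubgroup.closure_le H).2 (Set.singleton_subset_iff.2 (hlam _ hi)))

lemma mem_Nlat_iff_gamma (hM0 : Ms 0 = zLatQ d)
    (hMs : ∀ j, 1 ≤ j → j ≤ g → Ms j = Ms (j - 1) ⊔ AddSubgroup.closure {lam j})
    (hlam0 : lam 0 = 0) (hγ0 : γ 0 = 0)
    (hγ : ∀ j, 1 ≤ j → j ≤ g → γ j = (nj (j - 1) : ℚ) • γ (j - 1) + (lam j - lam (j - 1)))
    {m : ℕ} (hm : m ≤ g) (b : Fin d → ℤ) :
    b ∈ Nlat Ms m ↔ ∀ i ≤ m, γ i ∈ integralVectors b := by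
  rw [mem_Nlat_iff_le]
  exact ⟨fun h i hi => h (Ms_mono hMs hi hm (gamma_mem_Ms_s19 hMs hlam0 hγ0 hγ (by omega))),
    Ms_le_of_gamma_mem hM0 hMs hlam0 hγ (zLatQ_le_integralVectors b) hm⟩

end Tower

/-- The maps `ξ_j^±` are injective, map `σ_j^∓` onto `ρ_{j-1}^g + ρ_j^g` resp. `ρ_j^g + ℝ_{≥0}u_j`, and identify `N_{j-1} × ℤ` with the integral points of their images. -/
theorem stmt_19
    (d g : ℕ) (hg : 1 ≤ g)
    (ρ : Set (Fin d → ℝ))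
    (hρ : IsRatPolyCone ρ)
    (lam : ℕ → Fin d → ℚ)
    (hlam_mem : ∀ j, 1 ≤ j → j ≤ g → qcastR (lam j) ∈ dualSet ρ)
    (hlam_lt : ∀ j, 1 ≤ j → j < g → ltRho ρ (lam j) (lam (j + 1)))
    (Ms : ℕ → AddSubgroup (Fin d → ℚ))
    (hM0 : Ms 0 = zLatQ d)
    (hMs : ∀ j, 1 ≤ j → j ≤ g → Ms j = Ms (j - 1) ⊔ AddSubgroup.closure {lam j})
    (nj : ℕ → ℕ)
    (hnj : ∀ j, 1 ≤ j → j ≤ g → nj j = (Ms (j - 1)).relIndex (Ms j))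
    (γ : ℕ → Fin d → ℚ)
    (hγ1 : γ 1 = lam 1)
    (hγrec : ∀ j, 1 ≤ j → j < g → γ (j + 1) = (nj j : ℚ) • γ j + lam (j + 1) - lam j)
    (hlam0 : lam 0 = 0) (hγ0 : γ 0 = 0) :
    ∀ j, 1 ≤ j → (hjg : j ≤ g) →
      -- (i) injectivity
      (Function.Injective (xiMinus g γ nj j) ∧ Function.Injective (xiPlus g γ nj j)) ∧
      -- (ii) images of σ_j^- and σ_j^+
      ((xiMinus g γ nj j) '' (sigmaMinus ρ lam j)
          = {x | ∃ y ∈ rhoJG g ρ γ nj (j - 1), ∃ z ∈ rhoJG g ρ γ nj j, x = y + z} ∧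
        (xiPlus g γ nj j) '' (sigmaPlus ρ lam j)
          = {x | ∃ y ∈ rhoJG g ρ γ nj j, ∃ c : ℝ, 0 ≤ c ∧
              x = y + c • ((0, Pi.single (⟨j - 1, by omega⟩ : Fin g) (1 : ℝ))
                : (Fin d → ℝ) × (Fin g → ℝ))}) ∧
      -- (iii) lattice points
      ((xiMinus g γ nj j) ''
          {p : (Fin d → ℝ) × ℝ | (∃ b ∈ Nlat Ms (j - 1), p.1 = icastR b) ∧ ∃ z : ℤ, p.2 = z}
        = Set.range (xiMinus g γ nj j)
            ∩ {q | ∃ (b : Fin d → ℤ) (c : Fin g → ℤ), q = (icastR b, fun k => (c k : ℝ))} ∧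
       (xiPlus g γ nj j) ''
          {p : (Fin d → ℝ) × ℝ | (∃ b ∈ Nlat Ms (j - 1), p.1 = icastR b) ∧ ∃ z : ℤ, p.2 = z}
        = Set.range (xiPlus g γ nj j)
            ∩ {q | ∃ (b : Fin d → ℤ) (c : Fin g → ℤ), q = (icastR b, fun k => (c k : ℝ))}) := by
  intro j hj hjg
  have hγ : ∀ i, 1 ≤ i → i ≤ g → γ i = (nj (i - 1) : ℚ) • γ (i - 1) + (lam i - lam (i - 1)) :=
    fun i hi hig => gamma_eq_of_rec hγ1 hγrec hlam0 hγ0 hi hig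
  have hL : ∀ a ∈ ρ, 0 ≤ pairQ a (lam j - lam (j - 1)) :=
    lam_sub_pred_mem_dualSet hlam0 hlam_mem hlam_lt hj hjg
  have hNlat := mem_Nlat_iff_gamma hM0 hMs hlam0 hγ0 hγ (by omega : j - 1 ≤ g)
  have hnγ : ∀ b ∈ Nlat Ms (j - 1), (nj j : ℚ) • γ j ∈ integralVectors b := fun b hb =>
    mem_Nlat_iff_le.1 hb (nsmul_gamma_mem_Ms_pred hMs hnj hlam0 hγ0 hγ hj hjg)
  refine ⟨⟨?_, ?_⟩, ⟨?_, ?_⟩, ?_, ?_⟩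
  · exact injective_of_fst_of_apply_eq_add _ (fun a => nj (j - 1) * pairQ a (γ (j - 1)))
      (fun _ => rfl) (xiMinus_apply_pred γ nj hj hjg)
  · exact injective_of_fst_of_apply_eq_add _ (fun a => nj (j - 1) * pairQ a (γ (j - 1)))
      (fun _ => rfl) (xiPlus_apply_pred γ nj hj hjg)
  · exact image_sigmaMinus hj (hγ j hj hjg) hL (fun _ ha _ hb => hρ.add_mem ha hb)
      (fun _ ht _ ha => hρ.smul_mem ht ha)
  · exact image_sigmaPlus hj hjg (hγ j hj hjg) hL
  · exact image_lattice_eq_range_inter hj hjg hγ0 hNlat (fun _ => rfl) (xiMinus_apply_of_le γ nj)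
      (xiMinus_apply_pred γ nj hj hjg) fun b hb => xiMinus_apply_int γ nj ((hNlat b).1 hb)
  · exact image_lattice_eq_range_inter hj hjg hγ0 hNlat (fun _ => rfl) (xiPlus_apply_of_le γ nj)
      (xiPlus_apply_pred γ nj hj hjg) fun b hb => xiPlus_apply_int γ nj ((hNlat b).1 hb) (hnγ b hb)
end
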